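/- arXiv:1712.00125 — 6 statements merged into one kernel-verified Lean document; each statement's English description precedes it below -/
import Mathlib

section
/- Let G be a 3-connected finite simple graph with at least 5 vertices (i.e., G is not K₄). Then every vertex of degree 3 in G is incident with a contractible edge. -/
open scoped Classical in
/-- Number of occurrences of `a` in the list `l` (classical count). -/
noncomputable def listCount {α : Type*} (l : List α) (a : α) : ℕ := l.count a

namespace SimpleGraph

variable {V : Type*}

/-- A spanning closed walk that uses each edge at most twice. -/
def IsGoodWalk {G : SimpleGraph V} {v : V} (w : G.Walk v v) : Prop :=
  (∀ u, u ∈ w.support) ∧ ∀ e, listCount w.edges e ≤ 2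

/-- The closed walk `w` meets the vertex `u` at most `k` times, where the initial vertex of
the closed walk is counted once for its appearance as start/end. -/
def VisitsAtMost {G : SimpleGraph V} {v : V} (w : G.Walk v v) (u : V) (k : ℕ) : Prop :=
  listCount w.support.tail u ≤ k

/-- `G` has a `k`-walk: a spanning closed walk using each edge at most twice and meeting
each vertex at most `k` times. -/
def HasKWalk (G : SimpleGraph V) (k : ℕ) : Prop :=
  ∃ (v : V) (w : G.Walk v v), IsGoodWalk w ∧ ∀ u, VisitsAtMost w u k

/-- `G` has a `k`-trail: a spanning closed trail meeting each vertex at most `k` times. -/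
def HasKTrail (G : SimpleGraph V) (k : ℕ) : Prop :=
  ∃ (v : V) (w : G.Walk v v), w.IsTrail ∧ (∀ u, u ∈ w.support) ∧ ∀ u, VisitsAtMost w u k

/-- `G` is 3-connected: at least 4 vertices, and deleting any set of at most 2 vertices
leaves a connected graph. -/
def ThreeConnected (G : SimpleGraph V) : Prop :=
  4 ≤ Nat.card V ∧ ∀ S : Set V, S.ncard ≤ 2 → (G.induce Sᶜ).Connected

/-- `G` is 5-connected: at least 6 vertices, and deleting any set of at most 4 vertices
leaves a connected graph. -/
def FiveConnected (G : SimpleGraph V) : Prop :=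
  6 ≤ Nat.card V ∧ ∀ S : Set V, S.ncard ≤ 4 → (G.induce Sᶜ).Connected

/-- `G` is minimally 3-connected. -/
def MinimallyThreeConnected (G : SimpleGraph V) : Prop :=
  ThreeConnected G ∧ ∀ e ∈ G.edgeSet, ¬ ThreeConnected (G.deleteEdges {e})

/-- The degree of `v` in `G` (as the cardinality of its neighbor set). -/
noncomputable def degreeN (G : SimpleGraph V) (v : V) : ℕ := (G.neighborSet v).ncard

/-- `R` is a minor of `G`: there are nonempty pairwise disjoint branch sets, one
for each vertex of `R`, each inducing a connected subgraph of `G`, such that every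
edge of `R` is realized by an edge of `G` between the corresponding branch sets. -/
def IsMinorOf {W : Type*} (R : SimpleGraph W) (G : SimpleGraph V) : Prop :=
  ∃ B : W → Set V,
    (∀ w, (B w).Nonempty) ∧
    (Pairwise fun w₁ w₂ => Disjoint (B w₁) (B w₂)) ∧
    (∀ w, (G.induce (B w)).Connected) ∧
    ∀ ⦃w₁ w₂⦄, R.Adj w₁ w₂ → ∃ u ∈ B w₁, ∃ u' ∈ B w₂, G.Adj u u'

/-- The graph `G/xy` obtained from `G` by contracting the edge between `x` and `y`
(the vertex `y` is merged into `x`). -/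
def contractEdge (G : SimpleGraph V) (x y : V) : SimpleGraph {v : V // v ≠ y} where
  Adj a b := a ≠ b ∧
    (G.Adj a.val b.val ∨ (a.val = x ∧ G.Adj y b.val) ∨ (b.val = x ∧ G.Adj a.val y))
  symm := by
    constructor
    rintro a b ⟨hab, h | ⟨h1, h2⟩ | ⟨h1, h2⟩⟩
    · exact ⟨hab.symm, Or.inl h.symm⟩
    · exact ⟨hab.symm, Or.inr (Or.inr ⟨h1, h2.symm⟩)⟩
    · exact ⟨hab.symm, Or.inr (Or.inl ⟨h1, h2.symm⟩)⟩
  loopless := by constructor; rintro a ⟨h, -⟩; exact h rfl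

open scoped Classical in
/-- The projection sending every vertex of `A` to the contracted vertex `none`
and every other vertex to itself. -/
noncomputable def projSet (A : Set V) (u : V) : Option {v : V // v ∉ A} :=
  if h : u ∈ A then none else some ⟨u, h⟩

/-- The graph `G/A` obtained from `G` by identifying all vertices of `A` to a single
vertex (deleting loops and merging parallel edges). -/
def contractSet (G : SimpleGraph V) (A : Set V) : SimpleGraph (Option {v : V // v ∉ A}) where
  Adj a b := a ≠ b ∧ ∃ u u', G.Adj u u' ∧ projSet A u = a ∧ projSet A u' = b
  symm := by
    constructor
    rintro a b ⟨hab, u, u', h1, h2, h3⟩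
    exact ⟨hab.symm, u', u, h1.symm, h3, h2⟩
  loopless := by constructor; rintro a ⟨h, -⟩; exact h rfl

/-- `s` is an independent set of `G`. -/
def IsIndepSet' (G : SimpleGraph V) (s : Set V) : Prop :=
  s.Pairwise fun a b => ¬ G.Adj a b

/-- The number of connected components of `G`. -/
noncomputable def numComponents (G : SimpleGraph V) : ℕ := Nat.card G.ConnectedComponent

/-- `G` is `m`-tree-connected: it has `m` pairwise edge-disjoint spanning trees. -/
def TreeConnected (m : ℕ) (G : SimpleGraph V) : Prop :=
  ∃ T : Fin m → SimpleGraph V, (∀ i, T i ≤ G) ∧ (∀ i, (T i).IsTree) ∧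
    Pairwise fun i j => Disjoint (T i).edgeSet (T j).edgeSet

/-- `A` is the vertex set of an `m`-tree-connected component of `G`, i.e. a maximal
subset of vertices inducing an `m`-tree-connected subgraph. -/
def IsMaxTCSet (m : ℕ) (G : SimpleGraph V) (A : Set V) : Prop :=
  TreeConnected m (G.induce A) ∧ ∀ B : Set V, A ⊆ B → TreeConnected m (G.induce B) → B = A

/-- `e_G(S)`: the number of edges of `G` with both ends in `S`. -/
noncomputable def edgesWithin (G : SimpleGraph V) (S : Set V) : ℕ :=
  {e ∈ G.edgeSet | ∀ v ∈ e, v ∈ S}.ncard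

/-- `Ω(G) = |P| - e_G(P)/2`, where `P` is the partition of `V(G)` into the
`2`-tree-connected components of `G` and `e_G(P)` is the number of edges of `G`
joining different parts of `P`. -/
noncomputable def Omega (G : SimpleGraph V) : ℚ :=
  ({A : Set V | IsMaxTCSet 2 G A}.ncard : ℚ) -
    (1 / 2) * ({e ∈ G.edgeSet | ¬ ∃ A, IsMaxTCSet 2 G A ∧ ∀ v ∈ e, v ∈ A}.ncard : ℚ)

end SimpleGraph

/-!
Suppose no edge at `v`, with `N(v) = {p, q, r}`, is contractible. Then every edge `vx` lies in a
3-separator `{v, x, w_x}`, and since `v` has degree 3, `G - {v, x, w_x}` has exactly two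
components, one for each of the other two neighbours of `v`. For two such separations, the
intersection of a component of one with a component of the other has at most two boundary
vertices in each case that arises, so by 3-connectivity it is empty. This puts `w_q` on the
`r`-side of `{v, p, w_p}` and `w_p` on the `r`-side of `{v, q, w_q}`, and then the `q`-side of
`{v, p, w_p}` is `{q}` alone. So `q` has a neighbour `p`, which `{v, r, w_r}` separates from it.
-/

theorem Set.ncard_pair_le {α : Type*} (a b : α) : ({a, b} : Set α).ncard ≤ 2 :=
  (Set.ncard_insert_le a {b}).trans (by rw [Set.ncard_singleton])

theorem Set.exists_eq_pair_of_ncard_le_two {α : Type*} [Finite α] {s : Set α} {a : α}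
    (ha : a ∈ s) (hs : s.ncard ≤ 2) : ∃ b, s = {a, b} := by
  have hsub : (s \ {a}).Subsingleton := by
    rw [← Set.ncard_le_one_iff_subsingleton, Set.ncard_sdiff_singleton_of_mem ha]
    omega
  rcases hsub.eq_empty_or_singleton with hemp | ⟨b, hb⟩
  · exact ⟨a, by
      rw [Set.pair_eq_singleton]
      exact (Set.sdiff_eq_empty.1 hemp).antisymm (Set.singleton_subset_iff.2 ha)⟩
  · exact ⟨b, by rw [← hb, Set.insert_sdiff_singleton, Set.insert_eq_of_mem ha]⟩

namespace SimpleGraph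

variable {V W : Type*} {G : SimpleGraph V}

theorem Connected.of_surjective_of_adj {H : SimpleGraph W} (hG : G.Connected) (f : V → W)
    (hf : Function.Surjective f) (hadj : ∀ ⦃a b⦄, G.Adj a b → f a = f b ∨ H.Adj (f a) (f b)) :
    H.Connected := by
  have hreach : ∀ a b, G.Reachable a b → H.Reachable (f a) (f b) := by
    rintro a b ⟨p⟩
    induction p with
    | nil => rfl
    | cons h _ ih =>
      rcases hadj h with heq | hH
      · exact heq ▸ ih
      · exact hH.reachable.trans ih
  have := hG.nonempty.map f
  refine ⟨fun c d => ?_⟩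
  obtain ⟨a, rfl⟩ := hf c
  obtain ⟨b, rfl⟩ := hf d
  exact hreach a b (hG.preconnected a b)

/-- Components of `G - S` are the components of `G.isolate S` that avoid `S`. -/
def isolate (G : SimpleGraph V) (S : Set V) : SimpleGraph V where
  Adj a b := G.Adj a b ∧ a ∉ S ∧ b ∉ S
  symm := ⟨fun _ _ h => ⟨h.1.symm, h.2.2, h.2.1⟩⟩
  loopless := ⟨fun _ h => h.1.ne rfl⟩

section isolate

variable {S : Set V} {a b c s t : V}

@[simp]
theorem isolate_adj : (G.isolate S).Adj a b ↔ G.Adj a b ∧ a ∉ S ∧ b ∉ S := Iff.rfl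

theorem Reachable.isolate_eq_of_mem (h : (G.isolate S).Reachable a b) (ha : a ∈ S) : a = b := by
  obtain ⟨p⟩ := h
  cases p with
  | nil => rfl
  | cons hadj _ => exact absurd ha hadj.2.1

theorem Reachable.isolate_notMem (h : (G.isolate S).Reachable a b) (ha : a ∉ S) : b ∉ S :=
  fun hb => ha (h.symm.isolate_eq_of_mem hb ▸ hb)

theorem Reachable.isolate_mem_or_of_adj (h : (G.isolate S).Reachable a s) (ha : a ∉ S)
    (hst : G.Adj s t) : t ∈ S ∨ (G.isolate S).Reachable a t := by
  by_cases ht : t ∈ S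
  · exact Or.inl ht
  · exact Or.inr (h.trans (isolate_adj.2 ⟨hst, h.isolate_notMem ha, ht⟩).reachable)

theorem Reachable.induce_compl_of_isolate (h : (G.isolate S).Reachable a b) (ha : a ∉ S)
    (hb : b ∉ S) : (G.induce Sᶜ).Reachable ⟨a, ha⟩ ⟨b, hb⟩ := by
  obtain ⟨p⟩ := h
  induction p with
  | nil => rfl
  | cons hadj _ ih =>
    have hstep : (G.induce Sᶜ).Adj ⟨_, ha⟩ ⟨_, hadj.2.2⟩ := induce_adj.2 hadj.1
    exact hstep.reachable.trans (ih _ hb)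

theorem connected_induce_compl_of_forall_reachable (hc : c ∉ S)
    (h : ∀ t ∉ S, (G.isolate S).Reachable c t) : (G.induce Sᶜ).Connected := by
  have : Nonempty (Sᶜ : Set V) := ⟨⟨c, hc⟩⟩
  refine ⟨fun x y => ?_⟩
  exact ((h x x.2).symm.trans (h y y.2)).induce_compl_of_isolate x.2 y.2

end isolate

open scoped Classical in
/-- The vertex map of `G.contractEdge x y`. -/
noncomputable def mergeInto {x y : V} (hxy : x ≠ y) (a : V) : {v : V // v ≠ y} :=
  if h : a = y then ⟨x, hxy⟩ else ⟨a, h⟩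

section contractEdge

variable {x y a b : V} (hxy : x ≠ y)

theorem mergeInto_of_ne (ha : a ≠ y) : mergeInto hxy a = ⟨a, ha⟩ := dif_neg ha

theorem mergeInto_self : mergeInto hxy y = ⟨x, hxy⟩ := dif_pos rfl

theorem mergeInto_eq_iff {c : {v : V // v ≠ y}} :
    mergeInto hxy a = c ↔ a = c.val ∨ (a = y ∧ c.val = x) := by
  unfold mergeInto
  split_ifs with ha
  · subst ha
    simp [Subtype.ext_iff, eq_comm, c.2.symm]
  · simp [Subtype.ext_iff, ha]

theorem contractEdge_adj_mergeInto (h : G.Adj a b) :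
    mergeInto hxy a = mergeInto hxy b ∨
      (G.contractEdge x y).Adj (mergeInto hxy a) (mergeInto hxy b) := by
  refine or_iff_not_imp_left.2 fun hne => ⟨hne, ?_⟩
  unfold mergeInto
  split_ifs with ha hb hb
  · exact absurd (ha.trans hb.symm) h.ne
  · exact Or.inr (Or.inl ⟨rfl, ha ▸ h⟩)
  · exact Or.inr (Or.inr ⟨rfl, hb ▸ h⟩)
  · exact Or.inl h

theorem connected_contractEdge_induce {S : Set {v : V // v ≠ y}}
    (h : (G.induce (mergeInto hxy ⁻¹' S)ᶜ).Connected) :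
    ((G.contractEdge x y).induce Sᶜ).Connected := by
  refine h.of_surjective_of_adj (fun a => ⟨mergeInto hxy a, a.2⟩) (fun c => ?_) fun a b hab => ?_
  · refine ⟨⟨c.1.1, ?_⟩, ?_⟩
    · show mergeInto hxy c.1.1 ∉ S
      rw [mergeInto_of_ne hxy c.1.2]
      exact c.2
    · simp [mergeInto_of_ne hxy c.1.2]
  · rcases contractEdge_adj_mergeInto hxy hab with heq | hadj
    · exact Or.inl (Subtype.ext heq)
    · exact Or.inr hadj

end contractEdge

theorem ThreeConnected.exists_adj_notMem [Finite V] (h3 : G.ThreeConnected) {X R : Set V}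
    (hR : R.ncard ≤ 2) {x y : V} (hx : x ∈ X) (hxR : x ∉ R) (hy : y ∉ X) (hyR : y ∉ R) :
    ∃ s ∈ X, ∃ t ∉ X, t ∉ R ∧ G.Adj s t := by
  obtain ⟨p⟩ := (h3.2 R hR).preconnected ⟨x, hxR⟩ ⟨y, hyR⟩
  obtain ⟨d, -, hs, ht⟩ := p.exists_boundary_dart {s | s.val ∈ X} hx hy
  exact ⟨d.fst, hs, d.snd, ht, d.snd.2, d.adj⟩

theorem ThreeConnected.exists_not_connected_of_contractEdge [Finite V] (h3 : G.ThreeConnected)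
    (h5 : 5 ≤ Nat.card V) {x y : V} (hxy : x ≠ y) (hn : ¬ (G.contractEdge x y).ThreeConnected) :
    ∃ w, ¬ (G.induce {x, y, w}ᶜ).Connected := by
  have hcard : 4 ≤ Nat.card {v : V // v ≠ y} := by
    have h := Set.ncard_compl ({y} : Set V)
    rw [Set.ncard_singleton, ← Nat.card_coe_set_eq] at h
    exact h ▸ by omega
  obtain ⟨S, hS, hdisc⟩ : ∃ S : Set {v : V // v ≠ y}, S.ncard ≤ 2 ∧
      ¬ ((G.contractEdge x y).induce Sᶜ).Connected := by
    simpa [ThreeConnected, hcard] using hn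
  have hpre := mt (connected_contractEdge_induce hxy) hdisc
  by_cases hx : ⟨x, hxy⟩ ∈ S
  · obtain ⟨b, rfl⟩ := Set.exists_eq_pair_of_ncard_le_two hx hS
    refine ⟨b.val, ?_⟩
    have hT : mergeInto hxy ⁻¹' {⟨x, hxy⟩, b} = {x, y, b.val} := by
      ext a
      simp only [Set.mem_preimage, Set.mem_insert_iff, Set.mem_singleton_iff, mergeInto_eq_iff]
      constructor
      · rintro ((h | ⟨h, -⟩) | (h | ⟨h, -⟩)) <;> simp [h]
      · rintro (rfl | rfl | rfl) <;> simp
    rwa [hT] at hpre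
  · refine absurd (h3.2 _ ?_) hpre
    have hsub : mergeInto hxy ⁻¹' S ⊆ Subtype.val '' S := by
      intro a ha
      have hay : a ≠ y := by rintro rfl; exact hx (mergeInto_self hxy ▸ ha)
      exact ⟨⟨a, hay⟩, mergeInto_of_ne hxy hay ▸ ha, rfl⟩
    exact (Set.ncard_le_ncard hsub).trans ((Set.ncard_image_le).trans hS)

structure SplitsInto (G : SimpleGraph V) (S : Set V) (y z : V) : Prop where
  left_notMem : y ∉ S
  right_notMem : z ∉ S
  reachable_or : ∀ t ∉ S, (G.isolate S).Reachable y t ∨ (G.isolate S).Reachable z t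
  not_reachable : ¬ (G.isolate S).Reachable y z

theorem SplitsInto.symm {S : Set V} {y z : V} (h : G.SplitsInto S y z) : G.SplitsInto S z y :=
  ⟨h.right_notMem, h.left_notMem, fun t ht => (h.reachable_or t ht).symm,
    fun h' => h.not_reachable h'.symm⟩

theorem ThreeConnected.splitsInto [Finite V] (h3 : G.ThreeConnected) {v x y z w : V}
    (hv : ∀ s, G.Adj v s ↔ s = x ∨ s = y ∨ s = z) (hxy : x ≠ y) (hxz : x ≠ z) (hyz : y ≠ z)
    (hsep : ¬ (G.induce {v, x, w}ᶜ).Connected) : G.SplitsInto {v, x, w} y z := by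
  set S : Set V := {v, x, w} with hS
  have hvx : v ≠ x := G.ne_of_adj ((hv x).2 (Or.inl rfl))
  have hvy : v ≠ y := G.ne_of_adj ((hv y).2 (Or.inr (Or.inl rfl)))
  have hvz : v ≠ z := G.ne_of_adj ((hv z).2 (Or.inr (Or.inr rfl)))
  have hvS : v ∈ S := by simp [hS]
  have hwS : w ∈ S := by simp [hS]
  have hwv : w ≠ v := by
    rintro rfl
    exact hsep (h3.2 _ (by simpa [hS, Set.pair_comm] using Set.ncard_pair_le w x))
  have hreach : ∀ t ∉ S, (G.isolate S).Reachable y t ∨ (G.isolate S).Reachable z t := by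
    intro t ht
    by_contra! hyzt
    -- the component of `t` would then be cut off from `v` by `{x, w}` alone
    obtain ⟨s, hs, u, hu, huR, hsu⟩ := h3.exists_adj_notMem
      (X := {s | (G.isolate S).Reachable t s}) (Set.ncard_pair_le x w) Reachable.rfl
      (by simp_all) (fun h => h.isolate_notMem ht hvS) (by simp [hvx, hwv.symm])
    obtain rfl : u = v := by
      rcases hs.isolate_mem_or_of_adj ht hsu with huS | hu'
      · simp only [hS, Set.mem_insert_iff, Set.mem_singleton_iff] at huS huR
        tauto
      · exact absurd hu' hu
    rcases (hv s).1 hsu.symm with rfl | rfl | rfl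
    · exact hs.isolate_notMem ht (by simp [hS])
    · exact hyzt.1 hs.symm
    · exact hyzt.2 hs.symm
  have hcut : ∀ c ∉ S, ¬ ∀ t ∉ S, (G.isolate S).Reachable c t := fun c hc h =>
    hsep (connected_induce_compl_of_forall_reachable hc h)
  have hnot : ∀ t ∉ S, ¬ (G.isolate S).Reachable w t := fun t ht h =>
    ht (h.isolate_eq_of_mem hwS ▸ hwS)
  have hwy : w ≠ y := by
    rintro rfl
    exact hcut z (by simp [hS, hvz.symm, hxz.symm, hyz.symm]) fun t ht =>
      (hreach t ht).resolve_left (hnot t ht)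
  have hwz : w ≠ z := by
    rintro rfl
    exact hcut y (by simp [hS, hvy.symm, hxy.symm, hyz]) fun t ht =>
      (hreach t ht).resolve_right (hnot t ht)
  have hyS : y ∉ S := by simp [hS, hvy.symm, hxy.symm, hwy.symm]
  refine ⟨hyS, by simp [hS, hvz.symm, hxz.symm, hwz.symm], hreach, fun hyz' => ?_⟩
  exact hcut y hyS fun t ht => (hreach t ht).elim id hyz'.trans

theorem SplitsInto.eq_left_of_adj {v x w y z s : V} (h : G.SplitsInto {v, x, w} y z)
    (hv : ∀ s, G.Adj v s → s = x ∨ s = y ∨ s = z)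
    (hs : (G.isolate {v, x, w}).Reachable y s) (hvs : G.Adj v s) : s = y := by
  rcases hv s hvs with rfl | rfl | rfl
  · exact absurd (by simp) (hs.isolate_notMem h.left_notMem)
  · rfl
  · exact absurd hs h.not_reachable

section degreeThree

variable [Finite V] {v p q r wp wq : V}

theorem ThreeConnected.reachable_right_of_splitsInto (h3 : G.ThreeConnected)
    (hp : G.SplitsInto {v, p, wp} q r) (hq : G.SplitsInto {v, q, wq} p r) :
    (G.isolate {v, p, wp}).Reachable r wq := by
  by_contra hwq
  have hq' := hp.left_notMem
  have hr' := hp.right_notMem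
  simp only [Set.mem_insert_iff, Set.mem_singleton_iff, not_or] at hq' hr'
  obtain ⟨s, ⟨hsp, hsq⟩, t, ht, htR, hst⟩ := h3.exists_adj_notMem
    (X := {s | (G.isolate {v, p, wp}).Reachable r s ∧ (G.isolate {v, q, wq}).Reachable r s})
    (R := {v, wp}) (Set.ncard_pair_le v wp) ⟨.rfl, .rfl⟩ (by simp [hr'.1, hr'.2.2])
    (y := q) (fun h => h.2.isolate_notMem hq.right_notMem (by simp)) (by simp [hq'.1, hq'.2.2])
  rcases hsp.isolate_mem_or_of_adj hp.right_notMem hst with htS | htp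
  · obtain rfl : t = p := by
      simp only [Set.mem_insert_iff, Set.mem_singleton_iff] at htS htR
      tauto
    rcases hsq.isolate_mem_or_of_adj hq.right_notMem hst with htS' | htq
    · exact hq.left_notMem htS'
    · exact hq.not_reachable htq.symm
  · rcases hsq.isolate_mem_or_of_adj hq.right_notMem hst with htS' | htq
    · simp only [Set.mem_insert_iff, Set.mem_singleton_iff] at htS'
      rcases htS' with rfl | rfl | rfl
      · exact htR (by simp)
      · exact hp.not_reachable htp.symm
      · exact hwq htp
    · exact ht ⟨htp, htq⟩

theorem ThreeConnected.not_reachable_left_and_right (h3 : G.ThreeConnected)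
    (hv : ∀ s, G.Adj v s → s = p ∨ s = q ∨ s = r)
    (hp : G.SplitsInto {v, p, wp} q r) (hq : G.SplitsInto {v, q, wq} p r)
    (hwq : (G.isolate {v, p, wp}).Reachable r wq) {s : V}
    (hs : (G.isolate {v, p, wp}).Reachable q s) (hs' : (G.isolate {v, q, wq}).Reachable r s) :
    False := by
  have hsp := hs.isolate_notMem hp.left_notMem
  have hsq := hs'.isolate_notMem hq.right_notMem
  have hr' := hp.right_notMem
  have hr'' := hq.right_notMem
  simp only [Set.mem_insert_iff, Set.mem_singleton_iff, not_or] at hsp hsq hr' hr''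
  obtain ⟨a, ⟨haA, haB⟩, t, ht, htR, hat⟩ := h3.exists_adj_notMem
    (X := {s | (G.isolate {v, p, wp}).Reachable q s ∧ (G.isolate {v, q, wq}).Reachable r s})
    (R := {q, wp}) (Set.ncard_pair_le q wp) ⟨hs, hs'⟩ (by simp [hsq.2.1, hsp.2.2])
    (y := r) (fun h => hp.not_reachable h.1) (by simp [hr''.2.1, hr'.2.2])
  rcases haA.isolate_mem_or_of_adj hp.left_notMem hat with htS | htA
  · simp only [Set.mem_insert_iff, Set.mem_singleton_iff] at htS
    rcases htS with rfl | rfl | rfl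
    · exact haB.isolate_notMem hq.right_notMem (by simp [hp.eq_left_of_adj hv haA hat.symm])
    · rcases haB.isolate_mem_or_of_adj hq.right_notMem hat with h | h
      · exact hq.left_notMem h
      · exact hq.not_reachable h.symm
    · exact htR (by simp)
  · rcases haB.isolate_mem_or_of_adj hq.right_notMem hat with htS | htB
    · simp only [Set.mem_insert_iff, Set.mem_singleton_iff] at htS
      rcases htS with rfl | rfl | rfl
      · exact htA.isolate_notMem hp.left_notMem (by simp)
      · exact htR (by simp)
      · exact hp.not_reachable (htA.trans hwq.symm)
    · exact ht ⟨htA, htB⟩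

theorem ThreeConnected.not_reachable_left_and_left (h3 : G.ThreeConnected)
    (hv : ∀ s, G.Adj v s → s = p ∨ s = q ∨ s = r)
    (hp : G.SplitsInto {v, p, wp} q r) (hq : G.SplitsInto {v, q, wq} p r)
    (hwq : (G.isolate {v, p, wp}).Reachable r wq) (hwp : (G.isolate {v, q, wq}).Reachable r wp)
    {s : V} (hs : (G.isolate {v, p, wp}).Reachable q s)
    (hs' : (G.isolate {v, q, wq}).Reachable p s) : False := by
  have hsp := hs.isolate_notMem hp.left_notMem
  have hsq := hs'.isolate_notMem hq.left_notMem
  have hr' := hp.right_notMem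
  have hr'' := hq.right_notMem
  simp only [Set.mem_insert_iff, Set.mem_singleton_iff, not_or] at hsp hsq hr' hr''
  obtain ⟨a, ⟨haA, haB⟩, t, ht, htR, hat⟩ := h3.exists_adj_notMem
    (X := {s | (G.isolate {v, p, wp}).Reachable q s ∧ (G.isolate {v, q, wq}).Reachable p s})
    (R := {p, q}) (Set.ncard_pair_le p q) ⟨hs, hs'⟩ (by simp [hsp.2.1, hsq.2.1])
    (y := r) (fun h => hp.not_reachable h.1) (by simp [hr'.2.1, hr''.2.1])
  rcases haA.isolate_mem_or_of_adj hp.left_notMem hat with htS | htA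
  · simp only [Set.mem_insert_iff, Set.mem_singleton_iff] at htS
    rcases htS with rfl | rfl | rfl
    · exact haB.isolate_notMem hq.left_notMem (by simp [hp.eq_left_of_adj hv haA hat.symm])
    · exact htR (by simp)
    · rcases haB.isolate_mem_or_of_adj hq.left_notMem hat with h | h
      · exact hwp.isolate_notMem hq.right_notMem h
      · exact hq.not_reachable (h.trans hwp.symm)
  · rcases haB.isolate_mem_or_of_adj hq.left_notMem hat with htS | htB
    · simp only [Set.mem_insert_iff, Set.mem_singleton_iff] at htS
      rcases htS with rfl | rfl | rfl
      · exact htA.isolate_notMem hp.left_notMem (by simp)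
      · exact htR (by simp)
      · exact hp.not_reachable (htA.trans hwq.symm)
    · exact ht ⟨htA, htB⟩

theorem ThreeConnected.eq_of_reachable_left (h3 : G.ThreeConnected)
    (hv : ∀ s, G.Adj v s → s = p ∨ s = q ∨ s = r)
    (hp : G.SplitsInto {v, p, wp} q r) (hq : G.SplitsInto {v, q, wq} p r)
    (hwq : (G.isolate {v, p, wp}).Reachable r wq) (hwp : (G.isolate {v, q, wq}).Reachable r wp)
    {s : V} (hs : (G.isolate {v, p, wp}).Reachable q s) : s = q := by
  by_contra hsq
  have hsp := hs.isolate_notMem hp.left_notMem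
  have hswq : s ≠ wq := by
    rintro rfl
    exact hp.not_reachable (hs.trans hwq.symm)
  have hsS : s ∉ ({v, q, wq} : Set V) := by
    simp only [Set.mem_insert_iff, Set.mem_singleton_iff, not_or] at hsp ⊢
    exact ⟨hsp.1, hsq, hswq⟩
  rcases hq.reachable_or s hsS with h | h
  · exact h3.not_reachable_left_and_left hv hp hq hwq hwp hs h
  · exact h3.not_reachable_left_and_right hv hp hq hwq hs h

theorem ThreeConnected.false_of_splitsInto (h3 : G.ThreeConnected) {wr : V}
    (hv : ∀ s, G.Adj v s → s = p ∨ s = q ∨ s = r)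
    (hp : G.SplitsInto {v, p, wp} q r) (hq : G.SplitsInto {v, q, wq} p r)
    (hr : G.SplitsInto {v, r, wr} p q) : False := by
  have hq' := hp.left_notMem
  have hr' := hp.right_notMem
  simp only [Set.mem_insert_iff, Set.mem_singleton_iff, not_or] at hq' hr'
  obtain ⟨s, hs, t, ht, htR, hst⟩ := h3.exists_adj_notMem
    (X := {s | (G.isolate {v, p, wp}).Reachable q s}) (R := {v, wp}) (Set.ncard_pair_le v wp)
    Reachable.rfl (by simp [hq'.1, hq'.2.2]) (y := r) hp.not_reachable
    (by simp [hr'.1, hr'.2.2])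
  obtain rfl := h3.eq_of_reachable_left hv hp hq (h3.reachable_right_of_splitsInto hp hq)
    (h3.reachable_right_of_splitsInto hq hp) hs
  obtain rfl : t = p := by
    rcases hs.isolate_mem_or_of_adj hp.left_notMem hst with h | h
    · simp only [Set.mem_insert_iff, Set.mem_singleton_iff] at h htR
      tauto
    · exact absurd h ht
  exact hr.not_reachable (isolate_adj.2 ⟨hst.symm, hr.left_notMem, hr.right_notMem⟩).reachable

end degreeThree

end SimpleGraph

open SimpleGraph in
/-- In a 3-connected finite simple graph with at least 5 vertices, every
vertex of degree 3 is incident with a contractible edge. -/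
theorem statement1 {V : Type} [Finite V] (G : SimpleGraph V)
    (h3 : ThreeConnected G) (h5 : 5 ≤ Nat.card V) :
    ∀ v : V, G.degreeN v = 3 →
      ∃ u : V, G.Adj v u ∧ ThreeConnected (G.contractEdge v u) := by
  intro v hdeg
  obtain ⟨p, q, r, hpq, hpr, hqr, hN⟩ := Set.ncard_eq_three.1 hdeg
  have hv : ∀ s, G.Adj v s ↔ s = p ∨ s = q ∨ s = r := fun s => by
    rw [← mem_neighborSet, hN]
    simp
  by_contra! hcon
  have hsep : ∀ x, G.Adj v x → ∃ w, ¬ (G.induce {v, x, w}ᶜ).Connected := fun x hx =>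
    h3.exists_not_connected_of_contractEdge h5 hx.ne (hcon x hx)
  obtain ⟨wp, hwp⟩ := hsep p ((hv p).2 (by simp))
  obtain ⟨wq, hwq⟩ := hsep q ((hv q).2 (by simp))
  obtain ⟨wr, hwr⟩ := hsep r ((hv r).2 (by simp))
  exact h3.false_of_splitsInto (fun s hs => (hv s).1 hs)
    (h3.splitsInto hv hpq hpr hqr hwp)
    (h3.splitsInto (fun s => (hv s).trans (by tauto)) hpq.symm hqr hpr hwq)
    (h3.splitsInto (fun s => (hv s).trans (by tauto)) hpr.symm hqr.symm hpq hwr)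
end

section
/- Every minimally 3-connected finite simple graph has at least one vertex of degree 3. -/
/-!
Suppose every vertex has degree at least 4. Among the vertex sets `A` separated from a nonempty
rest by at most three vertices `T` (fragments), take one, `P`, of minimum size, and an edge `uv`
inside `P`. By minimality of `G`, at most two vertices `S` separate `v`'s side `X` from `u`'s side
`Y` in `G - uv`; then `X` and `Y` are fragments of `G` with separators `S + u` and `S + v`.
Crossing `P` with `X` or with `Y` would give a smaller fragment unless the far side of `P` lies
in `S`. Then `P = {u, v}`, so the (at least three) vertices of `T` are common neighbours of `u`
and `v`; but every common neighbour of `u` and `v` lies in `S`.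
-/

namespace SimpleGraph

variable {V : Type*} {G : SimpleGraph V}

theorem Reachable.mem_of_forall_adj {C : Set V} (hC : ∀ x y, G.Adj x y → x ∈ C → y ∈ C)
    {a b : V} (h : G.Reachable a b) (ha : a ∈ C) : b ∈ C := by
  obtain ⟨w⟩ := h
  induction w with
  | nil => exact ha
  | cons hadj _ ih => exact ih (hC _ _ hadj ha)

theorem exists_adj_mem_of_neighborSet_subset [Finite V] {A T : Set V} {a : V}
    (h : G.neighborSet a ⊆ A ∪ T) (hT : T.ncard < G.degreeN a) : ∃ b ∈ A, G.Adj a b := by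
  by_contra! hA
  have hsub : G.neighborSet a ⊆ T := fun b hb => (h hb).resolve_left fun hbA => hA b hbA hb
  exact hT.not_ge (Set.ncard_le_ncard hsub)

theorem adj_deleteEdges_or {a b u v : V} (h : G.Adj a b) :
    (G.deleteEdges {s(u, v)}).Adj a b ∨ (a = u ∧ b = v) ∨ (a = v ∧ b = u) := by
  by_cases hab : s(a, b) = s(u, v)
  · exact Or.inr (Sym2.eq_iff.1 hab)
  · exact Or.inl (deleteEdges_adj.2 ⟨h, hab⟩)

/-- `A` is a `T`-fragment in Mader's sense: `T` separates `A` from the rest of the graph. -/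
structure IsFragment (G : SimpleGraph V) (A T : Set V) : Prop where
  nonempty : A.Nonempty
  disjoint : Disjoint A T
  compl_nonempty : (A ∪ T)ᶜ.Nonempty
  neighborSet_subset : ∀ a ∈ A, G.neighborSet a ⊆ A ∪ T

namespace IsFragment

variable {A T X T' : Set V}

theorem compl (h : IsFragment G A T) : IsFragment G (A ∪ T)ᶜ T where
  nonempty := h.compl_nonempty
  disjoint := Set.disjoint_left.2 fun _ hx hT => hx (Or.inr hT)
  compl_nonempty := by
    obtain ⟨a, ha⟩ := h.nonempty
    exact ⟨a, by simp [ha, h.disjoint.notMem_of_mem_left ha]⟩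
  neighborSet_subset a ha b hab := by
    by_cases hbA : b ∈ A
    · exact absurd (h.neighborSet_subset b hbA (G.adj_symm hab)) ha
    by_cases hbT : b ∈ T
    · exact Or.inr hbT
    · exact Or.inl fun hb => hb.elim hbA hbT

theorem not_connected_induce (h : IsFragment G A T) : ¬ (G.induce Tᶜ).Connected := by
  intro hconn
  obtain ⟨a, ha⟩ := h.nonempty
  obtain ⟨b, hb⟩ := h.compl_nonempty
  have hbT : b ∉ T := fun hbT => hb (Or.inr hbT)
  have hbA : (⟨b, hbT⟩ : (Tᶜ : Set V)) ∈ {x : (Tᶜ : Set V) | x.1 ∈ A} :=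
    (hconn.preconnected ⟨a, h.disjoint.notMem_of_mem_left ha⟩ ⟨b, hbT⟩).mem_of_forall_adj
      (fun (x y : (Tᶜ : Set V)) hxy hx => (h.neighborSet_subset x hx hxy).resolve_right y.2) ha
  exact hb (Or.inl hbA)

theorem exists_of_not_connected_induce (hT : Tᶜ.Nonempty) (h : ¬ (G.induce Tᶜ).Connected) :
    ∃ A, IsFragment G A T := by
  obtain ⟨a, b, hab⟩ : ∃ a b : (Tᶜ : Set V), ¬ (G.induce Tᶜ).Reachable a b := by
    by_contra! hr
    exact h (connected_iff _ |>.2 ⟨hr, hT.to_subtype⟩)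
  refine ⟨G.componentComplMk a.2, ComponentCompl.nonempty _,
    (ComponentCompl.disjoint_right _).symm, ⟨b, ?_⟩, fun x hx y hxy => ?_⟩
  · rintro (hbC | hbT)
    · obtain ⟨_, hba⟩ := ComponentCompl.mem_supp_iff.1 hbC
      exact hab (ConnectedComponent.eq.1 hba).symm
    · exact b.2 hbT
  · by_cases hyT : y ∈ T
    · exact Or.inr hyT
    · exact Or.inl (ComponentCompl.mem_of_adj x y hx hyT hxy)

/-- The two crossing corners `P ∩ X` and `(P ∪ T)ᶜ ∩ (X ∪ T')ᶜ` have separators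
`T ∩ X ∪ T' ∩ (P ∪ T)` and `T \ X ∪ T' \ (P ∪ T)`, of total size at most `|T| + |T'|`. -/
theorem exists_crossing [Finite V] {P : Set V} (hP : IsFragment G P T) (hX : IsFragment G X T')
    (hPX : (P ∩ X).Nonempty) (hQY : ((P ∪ T)ᶜ ∩ (X ∪ T')ᶜ).Nonempty) :
    ∃ T₁ T₂ : Set V, IsFragment G (P ∩ X) T₁ ∧ IsFragment G ((P ∪ T)ᶜ ∩ (X ∪ T')ᶜ) T₂ ∧
      T₁.ncard + T₂.ncard ≤ T.ncard + T'.ncard := by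
  have dP := Set.disjoint_left.1 hP.disjoint
  have dX := Set.disjoint_left.1 hX.disjoint
  refine ⟨T ∩ X ∪ T' ∩ (P ∪ T), T \ X ∪ T' \ (P ∪ T), ⟨hPX, ?_, ?_, ?_⟩, ⟨hQY, ?_, ?_, ?_⟩, ?_⟩
  · exact Set.disjoint_left.2 fun a ha h => h.elim (dP ha.1 ·.1) (dX ha.2 ·.1)
  · obtain ⟨q, hq, hq'⟩ := hQY
    exact ⟨q, by simp_all⟩
  · intro a ha b hb
    have h₁ := hP.neighborSet_subset a ha.1 hb
    have h₂ := hX.neighborSet_subset a ha.2 hb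
    simp only [Set.mem_union, Set.mem_inter_iff] at h₁ h₂ ⊢
    tauto
  · exact Set.disjoint_left.2 fun a ha h => h.elim (ha.1 <| Or.inr ·.1) (ha.2 <| Or.inr ·.1)
  · obtain ⟨p, hp, hp'⟩ := hPX
    exact ⟨p, by simp_all [dP hp, dX hp']⟩
  · intro a ha b hb
    have h₁ := hP.compl.neighborSet_subset a ha.1 hb
    have h₂ := hX.compl.neighborSet_subset a ha.2 hb
    simp only [Set.mem_union, Set.mem_inter_iff, Set.mem_sdiff, Set.mem_compl_iff] at h₁ h₂ ⊢
    tauto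
  · have := Set.ncard_union_le (T ∩ X) (T' ∩ (P ∪ T))
    have := Set.ncard_union_le (T \ X) (T' \ (P ∪ T))
    have := Set.ncard_inter_add_ncard_sdiff_eq_ncard T X
    have := Set.ncard_inter_add_ncard_sdiff_eq_ncard T' (P ∪ T)
    omega

theorem subset_neighborSet_of_pair [Finite V] {u v : V} (h : IsFragment G {u, v} T)
    (hdeg : T.ncard + 1 ≤ G.degreeN u) : T ⊆ G.neighborSet u := by
  have hN : G.neighborSet u ⊆ insert v T := fun b hb => by
    rcases h.neighborSet_subset u (Set.mem_insert u _) hb with (rfl | rfl) | hbT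
    · exact (G.irrefl hb).elim
    · exact Set.mem_insert _ _
    · exact Set.mem_insert_of_mem _ hbT
  have hNT := Set.eq_of_subset_of_ncard_le hN ((Set.ncard_insert_le v T).trans hdeg)
  exact hNT ▸ Set.subset_insert v T

end IsFragment

theorem ThreeConnected.three_le_ncard {A T : Set V} (hG : ThreeConnected G)
    (h : IsFragment G A T) : 3 ≤ T.ncard := by
  by_contra! hT
  exact h.not_connected_induce (hG.2 T (by omega))

theorem ThreeConnected.three_le_degreeN [Finite V] (hG : ThreeConnected G) (v : V) :
    3 ≤ G.degreeN v := by
  by_contra! hv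
  have hcard : ({v} ∪ G.neighborSet v).ncard < Nat.card V := by
    have := Set.ncard_insert_le v (G.neighborSet v)
    have := hG.1
    unfold degreeN at hv
    rw [Set.singleton_union]
    omega
  refine hv.not_ge (hG.three_le_ncard (A := {v}) ⟨Set.singleton_nonempty v, ?_, ?_, ?_⟩)
  · exact Set.disjoint_singleton_left.2 G.notMem_neighborSet_self
  · exact Set.nonempty_compl.2 fun h => by simp [h] at hcard
  · rintro a rfl
    exact Set.subset_union_right

structure IsMinFragment (G : SimpleGraph V) (k : ℕ) (P T : Set V) : Prop where
  isFragment : IsFragment G P T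
  ncard_le : T.ncard ≤ k
  ncard_le_ncard : ∀ A S, IsFragment G A S → S.ncard ≤ k → P.ncard ≤ A.ncard

theorem exists_isMinFragment {k : ℕ} (h : ∃ A S, IsFragment G A S ∧ S.ncard ≤ k) :
    ∃ P T, IsMinFragment G k P T := by
  classical
  have hex : ∃ n, ∃ A S, IsFragment G A S ∧ S.ncard ≤ k ∧ A.ncard = n :=
    let ⟨A, S, hA, hS⟩ := h
    ⟨_, A, S, hA, hS, rfl⟩
  obtain ⟨P, T, hP, hT, hn⟩ := Nat.find_spec hex
  exact ⟨P, T, hP, hT, fun A S hA hS => hn ▸ Nat.find_min' hex ⟨A, S, hA, hS, rfl⟩⟩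

theorem IsMinFragment.compl_subset_union [Finite V] {P T X T' : Set V}
    (hP : IsMinFragment G 3 P T) (hG : ThreeConnected G) (hX : IsFragment G X T')
    (hT' : T'.ncard ≤ 3) (hPX : (P ∩ X).Nonempty) (hPX' : ¬ P ⊆ X) : (P ∪ T)ᶜ ⊆ X ∪ T' := by
  intro q hq
  by_contra hq'
  obtain ⟨T₁, T₂, h₁, h₂, hsum⟩ := hP.isFragment.exists_crossing hX hPX ⟨q, hq, hq'⟩
  have := hG.three_le_ncard h₂
  have := hP.ncard_le
  have hle := hP.ncard_le_ncard _ _ h₁ (by omega)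
  have hlt : (P ∩ X).ncard < P.ncard :=
    Set.ncard_lt_ncard ⟨Set.inter_subset_left, fun h => hPX' (h.trans Set.inter_subset_right)⟩
  omega

/-- In `G - uv`, the set `S` separates the side `X` of `v` from `u`. -/
structure IsEdgeSeparation (G : SimpleGraph V) (u v : V) (S X : Set V) : Prop where
  isFragment : IsFragment (G.deleteEdges {s(u, v)}) X S
  right_mem : v ∈ X
  left_notMem : u ∉ X ∪ S

namespace IsEdgeSeparation

variable {u v t : V} {S X : Set V}

theorem symm (h : IsEdgeSeparation G u v S X) : IsEdgeSeparation G v u S (X ∪ S)ᶜ where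
  isFragment := Sym2.eq_swap ▸ h.isFragment.compl
  right_mem := h.left_notMem
  left_notMem hv := hv.elim (· (Or.inl h.right_mem))
    (h.isFragment.disjoint.notMem_of_mem_left h.right_mem)

theorem isFragment_insert [Finite V] (h : IsEdgeSeparation G u v S X)
    (hdeg : S.ncard + 1 < G.degreeN u) : IsFragment G X (insert u S) where
  nonempty := h.isFragment.nonempty
  disjoint := by
    rw [Set.disjoint_insert_right]
    exact ⟨fun hu => h.left_notMem (Or.inl hu), h.isFragment.disjoint⟩
  compl_nonempty := by
    have hY := h.isFragment.compl
    have hN : G.neighborSet u ⊆ (X ∪ S)ᶜ ∪ insert v S := fun b hb => by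
      rcases adj_deleteEdges_or (u := u) (v := v) hb with hb | ⟨-, rfl⟩ | ⟨rfl, -⟩
      · rcases hY.neighborSet_subset u h.left_notMem hb with hb | hb
        exacts [Or.inl hb, Or.inr (Or.inr hb)]
      · exact Or.inr (Set.mem_insert _ _)
      · exact absurd (Or.inl h.right_mem) h.left_notMem
    obtain ⟨b, hbY, hub⟩ := exists_adj_mem_of_neighborSet_subset hN
      ((Set.ncard_insert_le v S).trans_lt hdeg)
    refine ⟨b, fun hb => ?_⟩
    rcases hb with hb | rfl | hb
    exacts [hbY (Or.inl hb), G.irrefl hub, hbY (Or.inr hb)]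
  neighborSet_subset a ha b hb := by
    rcases adj_deleteEdges_or (u := u) (v := v) hb with hb | ⟨rfl, -⟩ | ⟨-, rfl⟩
    · rcases h.isFragment.neighborSet_subset a ha hb with hb | hb
      exacts [Or.inl hb, Or.inr (Or.inr hb)]
    · exact absurd (Or.inl ha) h.left_notMem
    · exact Or.inr (Set.mem_insert _ _)

theorem notMem_of_adj_of_adj (h : IsEdgeSeparation G u v S X) (hu : G.Adj u t)
    (hv : G.Adj v t) : t ∉ X := by
  intro ht
  rcases adj_deleteEdges_or (u := u) (v := v) hu.symm with htu | ⟨rfl, -⟩ | ⟨rfl, -⟩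
  · exact h.left_notMem (h.isFragment.neighborSet_subset t ht htu)
  · exact G.irrefl hu
  · exact G.irrefl hv

theorem mem_of_adj_of_adj (h : IsEdgeSeparation G u v S X) (hu : G.Adj u t)
    (hv : G.Adj v t) : t ∈ S := by
  have htX := h.notMem_of_adj_of_adj hu hv
  have htY := h.symm.notMem_of_adj_of_adj hv hu
  simp only [Set.mem_compl_iff, Set.mem_union, not_not] at htY
  exact htY.resolve_left htX

end IsEdgeSeparation

theorem MinimallyThreeConnected.exists_isEdgeSeparation (hG : MinimallyThreeConnected G)
    {u v : V} (huv : G.Adj u v) : ∃ S X, S.ncard ≤ 2 ∧ IsEdgeSeparation G u v S X := by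
  obtain ⟨S, hS, hnc⟩ : ∃ S : Set V, S.ncard ≤ 2 ∧
      ¬ ((G.deleteEdges {s(u, v)}).induce Sᶜ).Connected := by
    have := hG.2 s(u, v) huv
    unfold ThreeConnected at this
    push Not at this
    exact this hG.1.1
  have hSc : Sᶜ.Nonempty := Set.nonempty_compl.2 fun h => by
    have := hG.1.1
    rw [h, Set.ncard_univ] at hS
    omega
  obtain ⟨A, hA⟩ := IsFragment.exists_of_not_connected_induce hSc hnc
  by_cases h₁ : v ∈ A ∧ u ∉ A ∪ S
  · exact ⟨S, A, hS, hA, h₁.1, h₁.2⟩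
  by_cases h₂ : u ∈ A ∧ v ∉ A ∪ S
  · exact ⟨S, (A ∪ S)ᶜ, hS, (IsEdgeSeparation.mk (Sym2.eq_swap ▸ hA) h₂.1 h₂.2).symm⟩
  -- otherwise `A` would already be a fragment of `G` with only two separating vertices
  have hAG : IsFragment G A S := ⟨hA.nonempty, hA.disjoint, hA.compl_nonempty, fun a ha b hb => by
    rcases adj_deleteEdges_or (u := u) (v := v) hb with hb | ⟨rfl, rfl⟩ | ⟨rfl, rfl⟩
    · exact hA.neighborSet_subset a ha hb
    · by_contra hb'
      exact h₂ ⟨ha, hb'⟩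
    · by_contra hb'
      exact h₁ ⟨ha, hb'⟩⟩
  have := hG.1.three_le_ncard hAG
  omega

theorem IsMinFragment.compl_subset_of_isEdgeSeparation [Finite V] {P T S X : Set V} {u v : V}
    (hP : IsMinFragment G 3 P T) (hG : ThreeConnected G) (hsep : IsEdgeSeparation G u v S X)
    (hS : S.ncard ≤ 2) (hu₄ : 4 ≤ G.degreeN u) (hv₄ : 4 ≤ G.degreeN v) (hu : u ∈ P)
    (hv : v ∈ P) : (P ∪ T)ᶜ ⊆ S := by
  intro q hq
  have hX := hP.compl_subset_union hG (hsep.isFragment_insert (by omega))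
    ((Set.ncard_insert_le u S).trans (by omega)) ⟨v, hv, hsep.right_mem⟩
    (fun h => hsep.left_notMem (Or.inl (h hu))) hq
  have hY := hP.compl_subset_union hG (hsep.symm.isFragment_insert (by omega))
    ((Set.ncard_insert_le v S).trans (by omega)) ⟨u, hu, hsep.symm.right_mem⟩
    (fun h => hsep.symm.left_notMem (Or.inl (h hv))) hq
  have hqu : q ≠ u := fun h => hq (Or.inl (h ▸ hu))
  have hqv : q ≠ v := fun h => hq (Or.inl (h ▸ hv))
  simp only [Set.mem_union, Set.mem_insert_iff, Set.mem_compl_iff, hqu, hqv, false_or] at hX hY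
  tauto

theorem MinimallyThreeConnected.exists_isFragment [Finite V] (hG : MinimallyThreeConnected G)
    (hdeg : ∀ w, 4 ≤ G.degreeN w) : ∃ A T, IsFragment G A T ∧ T.ncard ≤ 3 := by
  obtain ⟨w⟩ : Nonempty V := (Nat.card_pos_iff.1 (by have := hG.1.1; omega)).1
  have hw := hdeg w
  obtain ⟨x, hx⟩ : (G.neighborSet w).Nonempty :=
    Set.nonempty_of_ncard_ne_zero (by unfold degreeN at hw; omega)
  obtain ⟨S, X, hS, hsep⟩ := hG.exists_isEdgeSeparation hx
  exact ⟨X, insert w S, hsep.isFragment_insert (by omega),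
    (Set.ncard_insert_le w S).trans (by omega)⟩

end SimpleGraph

open SimpleGraph in
/-- Every minimally 3-connected finite simple graph has a vertex of degree 3. -/
theorem statement2 {V : Type} [Finite V] (G : SimpleGraph V)
    (hmin : MinimallyThreeConnected G) :
    ∃ v : V, G.degreeN v = 3 := by
  by_contra! hne
  have hdeg : ∀ w, 4 ≤ G.degreeN w :=
    fun w => (hmin.1.three_le_degreeN w).lt_of_ne (hne w).symm
  obtain ⟨P, T, hP⟩ := exists_isMinFragment (hmin.exists_isFragment hdeg)
  have hT := hP.ncard_le
  obtain ⟨u, hu⟩ := hP.isFragment.nonempty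
  obtain ⟨v, hv, huv⟩ := exists_adj_mem_of_neighborSet_subset
    (hP.isFragment.neighborSet_subset u hu) (by have := hdeg u; omega)
  obtain ⟨S, X, hS, hsep⟩ := hmin.exists_isEdgeSeparation huv
  have hQS := hP.compl_subset_of_isEdgeSeparation hmin.1 hsep hS (hdeg u) (hdeg v) hu hv
  have hPuv : {u, v} = P := Set.eq_of_subset_of_ncard_le (Set.pair_subset hu hv) <|
    calc P.ncard ≤ ((P ∪ T)ᶜ).ncard := hP.ncard_le_ncard _ _ hP.isFragment.compl hT
      _ ≤ S.ncard := Set.ncard_le_ncard hQS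
      _ ≤ 2 := hS
      _ = ({u, v} : Set V).ncard := (Set.ncard_pair huv.ne).symm
  have hTS : T ⊆ S := fun t ht => hsep.mem_of_adj_of_adj
    ((hPuv ▸ hP.isFragment).subset_neighborSet_of_pair (by have := hdeg u; omega) ht)
    ((Set.pair_comm u v ▸ hPuv ▸ hP.isFragment).subset_neighborSet_of_pair
      (by have := hdeg v; omega) ht)
  have := hmin.1.three_le_ncard hP.isFragment
  have := Set.ncard_le_ncard hTS
  omega
end

section
/- Let G be a minimally 3-connected finite simple graph and let e be an edge of G joining two vertices of degree at least 4. Then the graph G/e obtained by contracting e is also minimally 3-connected. -/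
/-!
Write `x'` for the vertex of `G/xy` into which `x` and `y` are merged. Deleting at most two
vertices of `G/xy` either spares `x'`, and then it is the image of deleting the same vertices
of `G`, or it deletes `x'` and at most one more vertex `z`, and then it is `G - {x, y, z}`.
So `G/xy` is 3-connected as soon as every `G - {x, y, z}` is connected. To see this, apply
minimality of `G` to `xy`: there is a set `S` of at most two vertices such that `xy` is a bridge
of `G - S`, splitting it into the components `Dx ∋ x` and `Dy ∋ y`. The degree bounds give
`|S| = 2`, `Dx ≠ {x}` and `Dy ≠ {y}`, and 3-connectivity of `G` lets every vertex of `Dx - x`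
reach each vertex of `S` inside `Dx - x`; this connects `G - {x, y, z}` in all cases.

For minimality, an edge `f` of `G/xy` is the image of an edge `g ≠ xy` of `G`, and
`G/xy - f ≤ (G - g)/xy`. The graph `G - g` has a separator `S` of at most two vertices, and `x`
and `y` keep degree at least three in `G - g`; this is enough to choose two vertices separated
by `S` whose images are separated by the image of `S` in `(G - g)/xy`.
-/

theorem Set.exists_subset_pair_of_ncard_le_two {α : Type*} {s : Set α} {a : α}
    (hs : s.ncard ≤ 2) (ha : a ∈ s) (hfin : s.Finite := by toFinite_tac) :
    ∃ c ∈ s, s ⊆ {a, c} := by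
  by_cases h : s ⊆ {a}
  · exact ⟨a, ha, h.trans (Set.subset_insert a {a})⟩
  obtain ⟨c, hc, hca⟩ := Set.not_subset.mp h
  refine ⟨c, hc, fun d hd => ?_⟩
  by_contra hd'
  simp only [Set.mem_insert_iff, Set.mem_singleton_iff, not_or] at hd' hca
  have := (Set.two_lt_ncard hfin).mpr
    ⟨a, ha, c, hc, d, hd, Ne.symm hca, Ne.symm hd'.1, Ne.symm hd'.2⟩
  omega

namespace SimpleGraph

section transfer

variable {α β : Type*} {G : SimpleGraph α} {H : SimpleGraph β}

theorem Reachable.map_of_adj (f : α → β) (hf : ∀ a b, G.Adj a b → H.Reachable (f a) (f b))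
    {a b : α} (h : G.Reachable a b) : H.Reachable (f a) (f b) := by
  obtain ⟨p⟩ := h
  induction p with
  | nil => rfl
  | cons hadj _ ih => exact (hf _ _ hadj).trans ih

theorem Connected.map_of_adj (f : α → β) (hf : ∀ a b, G.Adj a b → H.Reachable (f a) (f b))
    (hsurj : Function.Surjective f) (hG : G.Connected) : H.Connected :=
  have : Nonempty β := hG.nonempty.map f
  { preconnected := hsurj.forall₂.mpr fun a b => (hG.preconnected a b).map_of_adj f hf }

end transfer

variable {V : Type*}

/-- The vertex set of the component of `G - S` containing `a` (empty if `a ∈ S`). -/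
def componentOutside (G : SimpleGraph V) (S : Set V) (a : V) : Set V :=
  {v | ∃ (ha : a ∈ Sᶜ) (hv : v ∈ Sᶜ), (G.induce Sᶜ).Reachable ⟨a, ha⟩ ⟨v, hv⟩}

section componentOutside

variable {G H : SimpleGraph V} {S T L : Set V} {a v w : V}

theorem mem_componentOutside_self (ha : a ∉ S) : a ∈ G.componentOutside S a :=
  ⟨ha, ha, .refl _⟩

theorem notMem_of_mem_componentOutside (hv : v ∈ G.componentOutside S a) : v ∉ S :=
  hv.2.1

theorem mem_componentOutside_comm : v ∈ G.componentOutside S a ↔ a ∈ G.componentOutside S v :=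
  ⟨fun ⟨ha, hv, h⟩ => ⟨hv, ha, h.symm⟩, fun ⟨hv, ha, h⟩ => ⟨ha, hv, h.symm⟩⟩

theorem mem_componentOutside_of_adj (hv : v ∈ G.componentOutside S a) (hvw : G.Adj v w)
    (hw : w ∉ S) : w ∈ G.componentOutside S a :=
  let ⟨ha, hv, h⟩ := hv
  ⟨ha, hw, h.trans
    (Adj.reachable (G := G.induce Sᶜ) (u := ⟨v, hv⟩) (v := ⟨w, hw⟩) hvw)⟩

theorem componentOutside_subset (ha : a ∈ L)
    (hL : ∀ u ∈ L, ∀ w, G.Adj u w → w ∉ S → w ∈ L) :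
    G.componentOutside S a ⊆ L := by
  rintro v ⟨ha', hv, ⟨walk⟩⟩
  suffices ∀ (b c : ↥Sᶜ), (G.induce Sᶜ).Walk b c → b.val ∈ L → c.val ∈ L from
    this _ _ walk ha
  intro b c p
  induction p with
  | nil => exact id
  | @cons _ w _ hadj _ ih => exact fun hb => ih (hL _ hb _ hadj w.2)

theorem mem_componentOutside_trans (hv : v ∈ G.componentOutside S a)
    (hw : w ∈ G.componentOutside S v) : w ∈ G.componentOutside S a :=
  componentOutside_subset hv (fun _ hu _ hadj hw => mem_componentOutside_of_adj hu hadj hw) hw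

theorem componentOutside_subset_of_subset (hST : S ⊆ T) :
    G.componentOutside T a ⊆ G.componentOutside S a := fun _ hv =>
  have haT := notMem_of_mem_componentOutside (mem_componentOutside_comm.mp hv)
  componentOutside_subset (mem_componentOutside_self fun h => haT (hST h))
    (fun _ hu _ hadj hw => mem_componentOutside_of_adj hu hadj fun h => hw (hST h)) hv

theorem mem_componentOutside_of_connected (h : (G.induce Sᶜ).Connected) (ha : a ∉ S)
    (hv : v ∉ S) : v ∈ G.componentOutside S a :=
  ⟨ha, hv, h.preconnected _ _⟩

theorem connected_induce_of_forall_mem (ha : a ∉ S)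
    (h : ∀ v ∉ S, v ∈ G.componentOutside S a) : (G.induce Sᶜ).Connected :=
  have hreach (u : ↥Sᶜ) : (G.induce Sᶜ).Reachable ⟨a, ha⟩ u := (h u u.2).2.2
  { preconnected := fun u v => (hreach u).symm.trans (hreach v), nonempty := ⟨⟨a, ha⟩⟩ }

theorem mem_componentOutside_deleteEdges_or {e : Sym2 V} {a v w : V}
    (hv : v ∈ (G.deleteEdges {e}).componentOutside S a) (hvw : G.Adj v w) (hw : w ∉ S) :
    w ∈ (G.deleteEdges {e}).componentOutside S a ∨ s(v, w) = e := by
  by_cases he : s(v, w) = e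
  · exact Or.inr he
  · exact Or.inl (mem_componentOutside_of_adj hv (deleteEdges_adj.mpr ⟨hvw, he⟩) hw)

theorem exists_ne_notMem_componentOutside {S : Set V} {p q b : V} (hp : p ∉ S) (hq : q ∉ S)
    (hpq : q ∉ G.componentOutside S p) (hb : ∃ u, G.Adj b u ∧ u ∉ S) :
    ∃ p' q', p' ∉ S ∧ q' ∉ S ∧ q' ∉ G.componentOutside S p' ∧
      p' ≠ b ∧ q' ≠ b := by
  obtain ⟨u, hbu, hu⟩ := hb
  have hqp : q ≠ p := fun h => hpq (h ▸ mem_componentOutside_self hq)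
  by_cases hpb : p = b
  · subst hpb
    exact ⟨u, q, hu, hq,
      fun h => hpq (mem_componentOutside_trans (mem_componentOutside_of_adj
        (mem_componentOutside_self hp) hbu hu) h), hbu.ne', hqp⟩
  by_cases hqb : q = b
  · subst hqb
    exact ⟨p, u, hp, hu, fun h => hpq (mem_componentOutside_trans h
      (mem_componentOutside_comm.mp (mem_componentOutside_of_adj
        (mem_componentOutside_self hq) hbu hu))), hpb, hbu.ne'⟩
  exact ⟨p, q, hp, hq, hpq, hpb, hqb⟩

theorem ThreeConnected.mono (h : G ≤ H) (hG : G.ThreeConnected) : H.ThreeConnected :=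
  ⟨hG.1, fun S hS => (hG.2 S hS).mono fun _ _ hadj => h hadj⟩

theorem ThreeConnected.forall_mem_of_closed (hG : G.ThreeConnected) (hS : S.ncard ≤ 2)
    (ha : a ∈ L) (haS : a ∉ S) (hL : ∀ u ∈ L, ∀ w, G.Adj u w → w ∉ S → w ∈ L) :
    ∀ v ∉ S, v ∈ L := fun _ hv =>
  componentOutside_subset ha hL (mem_componentOutside_of_connected (hG.2 S hS) haS hv)

theorem exists_notMem_componentOutside_of_not_threeConnected (hcard : 4 ≤ Nat.card V)
    (h : ¬ G.ThreeConnected) :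
    ∃ S : Set V, S.ncard ≤ 2 ∧
      ∃ p q, p ∉ S ∧ q ∉ S ∧ q ∉ G.componentOutside S p := by
  simp only [ThreeConnected, hcard, true_and, not_forall] at h
  obtain ⟨S, hS, hnc⟩ := h
  obtain ⟨p, hp⟩ : Sᶜ.Nonempty := Set.nonempty_compl.mpr fun hS' => by
    rw [hS', Set.ncard_univ] at hS
    omega
  by_contra! hall
  exact hnc (connected_induce_of_forall_mem hp fun v hv => hall S hS p v hp hv)

end componentOutside

section degree

variable [Finite V]

theorem degreeN_lt_card (G : SimpleGraph V) (v : V) : G.degreeN v < Nat.card V :=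
  Set.ncard_lt_card fun h => G.irrefl (h.symm ▸ Set.mem_univ v : v ∈ G.neighborSet v)

theorem exists_adj_notMem {G : SimpleGraph V} {S : Set V} {v : V}
    (h : S.ncard < G.degreeN v) : ∃ u, G.Adj v u ∧ u ∉ S := by
  by_contra! hc
  exact (Set.ncard_le_ncard (fun u hu => hc u hu) (Set.toFinite S)).not_gt h

theorem degreeN_le_degreeN_deleteEdges_add_one (G : SimpleGraph V) (e : Sym2 V) (v : V) :
    G.degreeN v ≤ (G.deleteEdges {e}).degreeN v + 1 := by
  have hsub : G.neighborSet v ⊆ (G.deleteEdges {e}).neighborSet v ∪ {u | s(v, u) = e} :=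
    fun u hu => by
      by_cases he : s(v, u) = e
      · exact Or.inr he
      · exact Or.inl (deleteEdges_adj.mpr ⟨hu, he⟩)
  have hone : {u | s(v, u) = e}.ncard ≤ 1 :=
    (Set.ncard_le_one (Set.toFinite _)).mpr fun u hu w hw => Sym2.congr_right.mp (hu.trans hw.symm)
  exact (Set.ncard_le_ncard hsub).trans ((Set.ncard_union_le _ _).trans (by unfold degreeN; omega))

end degree

section contractEdge

variable {G : SimpleGraph V} {x y : V}

open scoped Classical in
noncomputable def contractMap (hxy : x ≠ y) (v : V) : {v : V // v ≠ y} :=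
  if h : v = y then ⟨x, hxy⟩ else ⟨v, h⟩

section contractMap

variable (hxy : x ≠ y)

theorem contractMap_of_ne {v : V} (h : v ≠ y) : contractMap hxy v = ⟨v, h⟩ := dif_neg h

theorem contractMap_right : contractMap hxy y = ⟨x, hxy⟩ := dif_pos rfl

theorem contractMap_val (c : {v : V // v ≠ y}) : contractMap hxy c.val = c :=
  contractMap_of_ne hxy c.2

theorem contractEdge_adj_iff {a b : {v : V // v ≠ y}} :
    (G.contractEdge x y).Adj a b ↔
      a ≠ b ∧ ∃ u v, G.Adj u v ∧ contractMap hxy u = a ∧ contractMap hxy v = b := by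
  refine and_congr_right fun _ => ⟨?_, ?_⟩
  · rintro (h | ⟨ha, h⟩ | ⟨hb, h⟩)
    · exact ⟨a, b, h, contractMap_val hxy a, contractMap_val hxy b⟩
    · exact ⟨y, b, h, (contractMap_right hxy).trans (Subtype.ext ha.symm),
        contractMap_val hxy b⟩
    · exact ⟨a, y, h, contractMap_val hxy a,
        (contractMap_right hxy).trans (Subtype.ext hb.symm)⟩
  · rintro ⟨u, v, huv, rfl, rfl⟩
    by_cases hu : u = y
    · subst hu
      rw [contractMap_right, contractMap_of_ne hxy huv.ne']
      exact Or.inr (Or.inl ⟨rfl, huv⟩)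
    by_cases hv : v = y
    · subst hv
      rw [contractMap_right, contractMap_of_ne hxy hu]
      exact Or.inr (Or.inr ⟨rfl, huv⟩)
    rw [contractMap_of_ne hxy hu, contractMap_of_ne hxy hv]
    exact Or.inl huv

theorem contractMap_eq_or_adj {u v : V} (huv : G.Adj u v) :
    contractMap hxy u = contractMap hxy v ∨
      (G.contractEdge x y).Adj (contractMap hxy u) (contractMap hxy v) := by
  rw [or_iff_not_imp_left, contractEdge_adj_iff hxy]
  exact fun hne => ⟨hne, u, v, huv, rfl, rfl⟩

end contractMap

theorem connected_induce_contractEdge (hxy : x ≠ y) {S : Set V} {S' : Set {v : V // v ≠ y}}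
    (hS : ∀ u ∉ S, contractMap hxy u ∉ S') (hsurj : ∀ c ∉ S', c.val ∉ S)
    (hc : (G.induce Sᶜ).Connected) : ((G.contractEdge x y).induce S'ᶜ).Connected := by
  refine hc.map_of_adj (fun u : ↥Sᶜ => ⟨contractMap hxy u, hS u u.2⟩) (fun u v huv => ?_)
    fun c => ⟨⟨c.val.val, hsurj c c.2⟩, Subtype.ext (contractMap_val hxy c)⟩
  rcases contractMap_eq_or_adj hxy huv with h | h
  · exact (Subtype.ext h : (⟨_, hS u u.2⟩ : ↥S'ᶜ) = ⟨_, hS v v.2⟩) ▸ .refl _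
  · exact Adj.reachable (G := (G.contractEdge x y).induce S'ᶜ) h

theorem ThreeConnected.contractEdge [Finite V] (hG : G.ThreeConnected) (hxy : x ≠ y)
    (hy : 4 ≤ G.degreeN y) (hxyz : ∀ z, (G.induce {x, y, z}ᶜ).Connected) :
    (G.contractEdge x y).ThreeConnected := by
  refine ⟨?_, fun S' hS' => ?_⟩
  · calc 4 ≤ G.degreeN y := hy
      _ ≤ ({y}ᶜ : Set V).ncard := Set.ncard_le_ncard fun _ hv => hv.ne'
      _ = Nat.card {v : V // v ≠ y} := (Nat.card_coe_set_eq _).symm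
  by_cases hx : (⟨x, hxy⟩ : {v : V // v ≠ y}) ∈ S'
  · obtain ⟨c, hc, hsub⟩ := Set.exists_subset_pair_of_ncard_le_two hS' hx
    refine connected_induce_contractEdge hxy (S := {x, y, c.val}) (fun u hu hmem => ?_) ?_
      (hxyz c.val)
    · rw [contractMap_of_ne hxy fun h => hu (Or.inr (Or.inl h))] at hmem
      rcases hsub hmem with h | h
      · exact hu (Or.inl (congrArg Subtype.val h))
      · exact hu (Or.inr (Or.inr (congrArg Subtype.val h)))
    · rintro d hd (h | h | h)
      · exact hd ((Subtype.ext h : d = ⟨x, hxy⟩) ▸ hx)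
      · exact d.2 h
      · exact hd ((Subtype.ext h : d = c) ▸ hc)
  · refine connected_induce_contractEdge hxy (S := Subtype.val '' S') (fun u hu => ?_) ?_
      (hG.2 _ ((Set.ncard_image_of_injective _ Subtype.val_injective).trans_le hS'))
    · by_cases huy : u = y
      · rwa [huy, contractMap_right]
      · rw [contractMap_of_ne hxy huy]
        exact fun hmem => hu ⟨_, hmem, rfl⟩
    · rintro c hc ⟨d, hd, hdc⟩
      exact hc (Subtype.ext hdc ▸ hd)

open scoped Classical in
theorem val_contractMap (hxy : x ≠ y) (u : V) :
    (contractMap hxy u).val = if u = y then x else u := by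
  unfold contractMap
  split_ifs <;> rfl

theorem exists_mem_of_contractMap_mem_image (hxy : x ≠ y) (S : Set V) :
    ∃ b, (b = x ∨ b = y) ∧
      ∀ u, contractMap hxy u ∈ contractMap hxy '' S → u ∈ S ∨ u = b := by
  classical
  by_cases hxS : x ∈ S
  on_goal 1 => refine ⟨y, Or.inr rfl, ?_⟩
  on_goal 2 => refine ⟨x, Or.inl rfl, ?_⟩
  all_goals
    rintro u ⟨s, hs, hsu⟩
    have := congrArg Subtype.val hsu
    simp only [val_contractMap] at this
    split_ifs at this <;> grind

theorem val_contractMap_mem_componentOutside (hxy : G.Adj x y) {S : Set V} {u : V}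
    (hu : contractMap hxy.ne u ∉ contractMap hxy.ne '' S) :
    (contractMap hxy.ne u).val ∈ G.componentOutside S u := by
  have huS : u ∉ S := fun h => hu ⟨u, h, rfl⟩
  by_cases huy : u = y
  · subst huy
    rw [contractMap_right]
    have hxS : x ∉ S := fun h => hu ⟨x, h, by rw [contractMap_right, contractMap_of_ne]⟩
    exact mem_componentOutside_of_adj (mem_componentOutside_self huS) hxy.symm hxS
  · rw [contractMap_of_ne hxy.ne huy]
    exact mem_componentOutside_self huS

theorem mem_componentOutside_of_contractEdge (hxy : G.Adj x y) {S : Set V} {p q : V}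
    (h : contractMap hxy.ne q ∈
      (G.contractEdge x y).componentOutside (contractMap hxy.ne '' S) (contractMap hxy.ne p)) :
    q ∈ G.componentOutside S p := by
  set π := contractMap hxy.ne
  have hback : ∀ {u}, π u ∉ π '' S → (π u).val ∈ G.componentOutside S p →
      u ∈ G.componentOutside S p :=
    fun hu h => mem_componentOutside_trans h
      (mem_componentOutside_comm.mp (val_contractMap_mem_componentOutside hxy hu))
  have hp := notMem_of_mem_componentOutside (mem_componentOutside_comm.mp h)
  have hsub := componentOutside_subset (G := G.contractEdge x y) (S := π '' S)
    (L := {c | c ∉ π '' S ∧ c.val ∈ G.componentOutside S p})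
    ⟨hp, val_contractMap_mem_componentOutside hxy hp⟩ ?_ h
  · exact hback (notMem_of_mem_componentOutside h) hsub.2
  rintro c ⟨hc, hcp⟩ d hcd hd
  obtain ⟨-, u, v, huv, rfl, rfl⟩ := (contractEdge_adj_iff hxy.ne).mp hcd
  refine ⟨hd, (mem_componentOutside_trans (mem_componentOutside_of_adj (hback hc hcp) huv
    fun h => hd ⟨v, h, rfl⟩) (val_contractMap_mem_componentOutside hxy hd))⟩

theorem not_threeConnected_contractEdge [Finite V] (hxy : G.Adj x y) (hx : 3 ≤ G.degreeN x)
    (hy : 3 ≤ G.degreeN y) (hG : ¬ G.ThreeConnected) :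
    ¬ (G.contractEdge x y).ThreeConnected := by
  have hcard : 4 ≤ Nat.card V := (G.degreeN_lt_card x).trans_le' hx
  obtain ⟨S, hS, p, q, hp, hq, hpq⟩ :=
    exists_notMem_componentOutside_of_not_threeConnected hcard hG
  obtain ⟨b, hbxy, hb⟩ := exists_mem_of_contractMap_mem_image hxy.ne S
  obtain ⟨p, q, hp, hq, hpq, hpb, hqb⟩ := exists_ne_notMem_componentOutside hp hq hpq
    (exists_adj_notMem (G := G) (v := b) (by rcases hbxy with rfl | rfl <;> omega))
  have himage : ∀ u ∉ S, u ≠ b → contractMap hxy.ne u ∉ contractMap hxy.ne '' S :=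
    fun u hu hub h => (hb u h).elim hu hub
  exact fun h3 => hpq (mem_componentOutside_of_contractEdge hxy
    (mem_componentOutside_of_connected (h3.2 _ ((Set.ncard_image_le (Set.toFinite S)).trans hS))
      (himage p hp hpb) (himage q hq hqb)))

theorem exists_edge_map_contractMap_eq (hxy : x ≠ y) {f : Sym2 {v : V // v ≠ y}}
    (hf : f ∈ (G.contractEdge x y).edgeSet) :
    ∃ g ∈ G.edgeSet, g.map (contractMap hxy) = f := by
  induction f using Sym2.ind with
  | h a b =>
    obtain ⟨-, u, v, huv, rfl, rfl⟩ := (contractEdge_adj_iff hxy).mp hf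
    exact ⟨s(u, v), huv, rfl⟩

theorem contractEdge_deleteEdges_le (hxy : x ≠ y) (g : Sym2 V) :
    (G.contractEdge x y).deleteEdges {g.map (contractMap hxy)} ≤
      (G.deleteEdges {g}).contractEdge x y := by
  intro c d h
  obtain ⟨hcd, hf⟩ := deleteEdges_adj.mp h
  obtain ⟨hne, u, v, huv, rfl, rfl⟩ := (contractEdge_adj_iff hxy).mp hcd
  refine (contractEdge_adj_iff hxy).mpr ⟨hne, u, v, deleteEdges_adj.mpr ⟨huv, ?_⟩, rfl, rfl⟩
  rintro rfl
  exact hf rfl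

theorem MinimallyThreeConnected.not_threeConnected_contractEdge_deleteEdges [Finite V]
    (hmin : G.MinimallyThreeConnected) (hxy : G.Adj x y) (hx : 4 ≤ G.degreeN x)
    (hy : 4 ≤ G.degreeN y) {f : Sym2 {v : V // v ≠ y}}
    (hf : f ∈ (G.contractEdge x y).edgeSet) :
    ¬ ((G.contractEdge x y).deleteEdges {f}).ThreeConnected := by
  obtain ⟨g, hg, rfl⟩ := exists_edge_map_contractMap_eq hxy.ne hf
  have hgxy : s(x, y) ∉ ({g} : Set (Sym2 V)) := by
    rintro rfl
    rw [Sym2.map_mk, mem_edgeSet, contractMap_right, contractMap_of_ne hxy.ne hxy.ne] at hf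
    exact hf.ne rfl
  have hx' := G.degreeN_le_degreeN_deleteEdges_add_one g x
  have hy' := G.degreeN_le_degreeN_deleteEdges_add_one g y
  exact fun h3 => not_threeConnected_contractEdge (deleteEdges_adj.mpr ⟨hxy, hgxy⟩)
    (by omega) (by omega) (hmin.2 g hg) (h3.mono (contractEdge_deleteEdges_le hxy.ne g))

end contractEdge

section bridge

variable {G : SimpleGraph V} {S : Set V} {x y : V}

/-- `s(x, y)` is a bridge of `G - S` whose deletion leaves exactly the components of `x` and
of `y`. -/
structure IsBridgeOutside (G : SimpleGraph V) (S : Set V) (x y : V) : Prop where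
  left_notMem : x ∉ S
  right_notMem : y ∉ S
  notMem_component : y ∉ (G.deleteEdges {s(x, y)}).componentOutside S x
  mem_or_mem : ∀ v ∉ S, v ∈ (G.deleteEdges {s(x, y)}).componentOutside S x ∨
    v ∈ (G.deleteEdges {s(x, y)}).componentOutside S y

theorem MinimallyThreeConnected.exists_isBridgeOutside (hmin : G.MinimallyThreeConnected)
    (hxy : G.Adj x y) : ∃ S : Set V, S.ncard ≤ 2 ∧ G.IsBridgeOutside S x y := by
  obtain ⟨S, hS, p, q, hp, hq, hpq⟩ :=
    exists_notMem_componentOutside_of_not_threeConnected hmin.1.1 (hmin.2 s(x, y) hxy)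
  set C := (G.deleteEdges {s(x, y)}).componentOutside S
  -- Since `G - S` is connected, every component of `G - xy - S` is left through `xy`.
  have hcross : ∀ v ∉ S, ∃ u ∈ C v, ∃ w ∉ S, w ∉ C v ∧ s(u, w) = s(x, y) := by
    intro v hv
    by_contra! hclosed
    have hall : ∀ w ∉ S, w ∈ C v :=
      hmin.1.forall_mem_of_closed hS (mem_componentOutside_self hv) hv fun u hu w huw hw =>
        by_contra fun hwC =>
          hclosed u hu w hw hwC ((mem_componentOutside_deleteEdges_or hu huw hw).resolve_left hwC)
    exact hpq (mem_componentOutside_trans (mem_componentOutside_comm.mp (hall p hp)) (hall q hq))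
  obtain ⟨u, hu, w, hw, -, huw⟩ := hcross p hp
  have hxS : x ∉ S ∧ y ∉ S := by
    have := notMem_of_mem_componentOutside hu
    rcases Sym2.eq_iff.mp huw with ⟨rfl, rfl⟩ | ⟨rfl, rfl⟩ <;> tauto
  refine ⟨S, hS, hxS.1, hxS.2, ?_, fun v hv => ?_⟩
  · obtain ⟨u, hu, w, -, hwC, huw⟩ := hcross x hxS.1
    rcases Sym2.eq_iff.mp huw with ⟨rfl, rfl⟩ | ⟨rfl, rfl⟩
    · exact hwC
    · exact absurd (mem_componentOutside_self hxS.1) hwC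
  · obtain ⟨u, hu, w, -, -, huw⟩ := hcross v hv
    rcases Sym2.eq_iff.mp huw with ⟨rfl, rfl⟩ | ⟨rfl, rfl⟩
    · exact Or.inl (mem_componentOutside_comm.mp hu)
    · exact Or.inr (mem_componentOutside_comm.mp hu)

namespace IsBridgeOutside

variable (hB : G.IsBridgeOutside S x y)
include hB

theorem ne : x ≠ y := fun h =>
  hB.notMem_component (h ▸ mem_componentOutside_self hB.left_notMem)

theorem symm : G.IsBridgeOutside S y x := by
  refine ⟨hB.right_notMem, hB.left_notMem, ?_, ?_⟩ <;> rw [Sym2.eq_swap]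
  · exact fun h => hB.notMem_component (mem_componentOutside_comm.mp h)
  · exact fun v hv => (hB.mem_or_mem v hv).symm

theorem notMem_right {v : V} (hv : v ∈ (G.deleteEdges {s(x, y)}).componentOutside S x) :
    v ∉ (G.deleteEdges {s(x, y)}).componentOutside S y := fun h =>
  hB.notMem_component (mem_componentOutside_trans hv (mem_componentOutside_comm.mp h))

theorem mem_or_of_adj {v w : V} (hv : v ∈ (G.deleteEdges {s(x, y)}).componentOutside S x)
    (hvw : G.Adj v w) :
    w ∈ (G.deleteEdges {s(x, y)}).componentOutside S x ∨ w ∈ S ∨ (v = x ∧ w = y) := by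
  by_cases hw : w ∈ S
  · exact Or.inr (Or.inl hw)
  refine (mem_componentOutside_deleteEdges_or hv hvw hw).imp_right fun he => Or.inr ?_
  rcases Sym2.eq_iff.mp he with h | ⟨rfl, rfl⟩
  · exact h
  · exact absurd hv hB.notMem_component

theorem exists_mem_component_ne [Finite V] (hS : S.ncard ≤ 2) (hx : 4 ≤ G.degreeN x) :
    ∃ u ∈ (G.deleteEdges {s(x, y)}).componentOutside S x, u ≠ x := by
  obtain ⟨u, hxu, hu⟩ := exists_adj_notMem (G := G) (v := x) (S := insert y S)
    ((Set.ncard_insert_le y S).trans_lt (by omega))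
  rcases hB.mem_or_of_adj (mem_componentOutside_self hB.left_notMem) hxu with h | h | h
  · exact ⟨u, h, hxu.ne'⟩
  · exact absurd (Set.mem_insert_of_mem y h) hu
  · exact absurd (h.2 ▸ Set.mem_insert y S) hu

/-- The separating set has two vertices: otherwise adding `y` to it would cut off the component
of `x`. -/
theorem exists_mem_ne [Finite V] (hG : G.ThreeConnected) (hS : S.ncard ≤ 2)
    (hy : 4 ≤ G.degreeN y) (z : V) : ∃ a ∈ S, a ≠ z := by
  by_contra! h
  obtain ⟨u, hu, huy⟩ := hB.symm.exists_mem_component_ne hS hy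
  rw [Sym2.eq_swap] at hu
  have hS1 : S.ncard ≤ 1 :=
    (Set.ncard_le_ncard fun a ha => h a ha).trans (Set.ncard_singleton z).le
  have hall := hG.forall_mem_of_closed ((Set.ncard_insert_le y S).trans (by omega))
    (mem_componentOutside_self hB.left_notMem)
    (by rintro (h | h); exacts [hB.ne h, hB.left_notMem h])
    (fun v hv w hvw hw => by
      rcases hB.mem_or_of_adj hv hvw with h | h | h
      · exact h
      · exact absurd (Set.mem_insert_of_mem y h) hw
      · exact absurd (h.2 ▸ Set.mem_insert y S) hw)
  refine hB.notMem_right (hall u ?_) hu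
  rintro (h | h)
  exacts [huy h, notMem_of_mem_componentOutside hu h]

/-- The component of `x` minus `x` reaches every separating vertex `s` directly: otherwise the
part of it attached to `s` would be cut off by `x` and the other separating vertex. -/
theorem mem_componentOutside_of_mem_sep [Finite V] (hG : G.ThreeConnected) (hS : S.ncard ≤ 2)
    {T : Set V} {u s : V} (hu : u ∈ (G.deleteEdges {s(x, y)}).componentOutside S x)
    (hux : u ≠ x) (hs : s ∈ S)
    (hT : ∀ v ∈ (G.deleteEdges {s(x, y)}).componentOutside S x, v ≠ x → v ∉ T)
    (hsT : s ∉ T) :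
    s ∈ G.componentOutside T u := by
  set D := (G.deleteEdges {s(x, y)}).componentOutside S x
  set K := G.componentOutside (D \ {x})ᶜ u
  by_cases hK : ∃ k ∈ K, G.Adj k s
  · obtain ⟨k, hk, hks⟩ := hK
    refine mem_componentOutside_of_adj (componentOutside_subset_of_subset ?_ hk) hks hsT
    exact fun v hv ⟨hvD, hvx⟩ => hT v hvD hvx hv
  simp only [not_exists, not_and] at hK
  have hKD : ∀ k ∈ K, k ∈ D ∧ k ≠ x := fun k hk => by
    have := notMem_of_mem_componentOutside hk
    exact Set.notMem_compl_iff.mp this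
  have hR : (insert x (S \ {s})).ncard ≤ 2 :=
    (Set.ncard_insert_le _ _).trans (by have := Set.ncard_sdiff_singleton_add_one hs; omega)
  have hyK := hG.forall_mem_of_closed (L := K) hR
    (mem_componentOutside_self (Set.notMem_compl_iff.mpr ⟨hu, hux⟩))
    (by rintro (h | ⟨h, -⟩); exacts [hux h, notMem_of_mem_componentOutside hu h])
    (fun k hk w hkw hw => by
      rcases hB.mem_or_of_adj (hKD k hk).1 hkw with h | h | h
      · exact mem_componentOutside_of_adj hk hkw
          (Set.notMem_compl_iff.mpr ⟨h, fun hwx => hw (hwx ▸ Set.mem_insert _ _)⟩)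
      · exact absurd (Set.mem_insert_of_mem x (Set.mem_sdiff_singleton.mpr
          ⟨h, fun hws => hK k hk (by rwa [← hws])⟩)) hw
      · exact absurd h.1 (hKD k hk).2)
    y (by rintro (h | ⟨h, -⟩); exacts [hB.ne h.symm, hB.right_notMem h])
  exact (hB.notMem_component (hKD y hyK).1).elim

theorem connected_induce_of_mem_sep [Finite V] (hG : G.ThreeConnected) (hS : S.ncard ≤ 2)
    (hy : 4 ≤ G.degreeN y) {z : V} (hz : z ∈ S) : (G.induce {x, y, z}ᶜ).Connected := by
  obtain ⟨b, hb, hbz⟩ := hB.exists_mem_ne hG hS hy z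
  obtain ⟨c, -, hsub⟩ := Set.exists_subset_pair_of_ncard_le_two hS hz
  have hSzb : ∀ v ∈ S, v = z ∨ v = b := fun v hv => by
    rcases hsub hb with h | rfl
    · exact absurd h hbz
    · exact hsub hv
  have hbT : b ∉ ({x, y, z} : Set V) := by
    rintro (h | h | h)
    exacts [hB.left_notMem (h ▸ hb), hB.right_notMem (h ▸ hb), hbz h]
  refine connected_induce_of_forall_mem hbT fun v hv => mem_componentOutside_comm.mp ?_
  by_cases hvS : v ∈ S
  · rcases hSzb v hvS with rfl | rfl
    · exact absurd (Or.inr (Or.inr rfl)) hv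
    · exact mem_componentOutside_self hbT
  rcases hB.mem_or_mem v hvS with hvD | hvD
  · refine hB.mem_componentOutside_of_mem_sep hG hS hvD (fun h => hv (Or.inl h)) hb ?_ hbT
    rintro w hw hwx (h | h | h)
    exacts [hwx h, hB.notMem_component (h ▸ hw), notMem_of_mem_componentOutside hw (h ▸ hz)]
  · rw [← Sym2.eq_swap] at hvD
    refine hB.symm.mem_componentOutside_of_mem_sep hG hS hvD (fun h => hv (Or.inr (Or.inl h)))
      hb ?_ hbT
    rintro w hw hwy (h | h | h)
    exacts [hB.symm.notMem_component (h ▸ hw), hwy h,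
      notMem_of_mem_componentOutside hw (h ▸ hz)]

theorem connected_induce_of_mem_right [Finite V] (hG : G.ThreeConnected) (hS : S.ncard ≤ 2)
    (hx : 4 ≤ G.degreeN x) (hy : 4 ≤ G.degreeN y) {z : V}
    (hz : z ∈ (G.deleteEdges {s(x, y)}).componentOutside S y) :
    (G.induce {x, y, z}ᶜ).Connected := by
  set T : Set V := {x, y, z}
  obtain ⟨a, ha, -⟩ := hB.exists_mem_ne hG hS hy z
  obtain ⟨u₀, hu₀, hu₀x⟩ := hB.exists_mem_component_ne hS hx
  have hST : ∀ s ∈ S, s ∉ T := by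
    rintro s hs (h | h | h)
    exacts [hB.left_notMem (h ▸ hs), hB.right_notMem (h ▸ hs),
      notMem_of_mem_componentOutside hz (h ▸ hs)]
  have hDT : ∀ w ∈ (G.deleteEdges {s(x, y)}).componentOutside S x, w ≠ x → w ∉ T := by
    rintro w hw hwx (h | h | h)
    exacts [hwx h, hB.notMem_component (h ▸ hw), hB.notMem_right hw (h ▸ hz)]
  have hleft : ∀ v ∈ (G.deleteEdges {s(x, y)}).componentOutside S x, v ≠ x →
      a ∈ G.componentOutside T v := fun v hv hvx =>
    hB.mem_componentOutside_of_mem_sep hG hS hv hvx ha hDT (hST a ha)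
  have hsep : ∀ s ∈ S, a ∈ G.componentOutside T s := fun s hs =>
    mem_componentOutside_trans (mem_componentOutside_comm.mp
      (hB.mem_componentOutside_of_mem_sep hG hS hu₀ hu₀x hs hDT (hST s hs)))
      (hleft u₀ hu₀ hu₀x)
  refine connected_induce_of_forall_mem (hST a ha) fun v hv => mem_componentOutside_comm.mp ?_
  by_contra hva
  -- Otherwise the component of `v` in `G - T` would be cut off by `y` and `z`.
  have hxv := hG.forall_mem_of_closed (S := {y, z}) (L := G.componentOutside T v)
    ((Set.ncard_insert_le _ _).trans (by rw [Set.ncard_singleton]))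
    (mem_componentOutside_self hv) (fun h => hv (Or.inr h))
    (fun w' hw' w hw'w hw => by
      refine mem_componentOutside_of_adj hw' hw'w ?_
      rintro (rfl | h)
      · have hw'T := notMem_of_mem_componentOutside hw'
        have hw'S : w' ∉ S := fun h => hva (mem_componentOutside_trans hw' (hsep w' h))
        rcases hB.mem_or_mem w' hw'S with h | h
        · exact hva (mem_componentOutside_trans hw' (hleft w' h fun h => hw'T (Or.inl h)))
        · rw [← Sym2.eq_swap] at h
          rcases hB.symm.mem_or_of_adj h hw'w with h | h | h
          exacts [hB.symm.notMem_component h, hB.left_notMem h, hw'T (Or.inr (Or.inl h.1))]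
      · exact hw h)
    x (by
      rintro (h | rfl)
      exacts [hB.ne h, hB.notMem_right (mem_componentOutside_self hB.left_notMem) hz])
  exact notMem_of_mem_componentOutside hxv (Or.inl rfl)

theorem connected_induce_compl_triple [Finite V] (hG : G.ThreeConnected) (hS : S.ncard ≤ 2)
    (hx : 4 ≤ G.degreeN x) (hy : 4 ≤ G.degreeN y) (z : V) :
    (G.induce {x, y, z}ᶜ).Connected := by
  by_cases hzS : z ∈ S
  · exact hB.connected_induce_of_mem_sep hG hS hy hzS
  rcases hB.mem_or_mem z hzS with hz | hz
  · rw [← Sym2.eq_swap] at hz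
    rw [Set.insert_comm]
    exact hB.symm.connected_induce_of_mem_right hG hS hy hx hz
  · exact hB.connected_induce_of_mem_right hG hS hx hy hz

end IsBridgeOutside

end bridge

end SimpleGraph

open SimpleGraph in
/-- In a minimally 3-connected finite simple graph, contracting an edge
joining two vertices of degree at least 4 yields a minimally 3-connected graph. -/
theorem statement4 {V : Type} [Finite V] (G : SimpleGraph V)
    (hmin : MinimallyThreeConnected G) (x y : V) (hxy : G.Adj x y)
    (hx : 4 ≤ G.degreeN x) (hy : 4 ≤ G.degreeN y) :
    MinimallyThreeConnected (G.contractEdge x y) := by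
  obtain ⟨S, hS, hB⟩ := hmin.exists_isBridgeOutside hxy
  exact ⟨hmin.1.contractEdge hxy.ne hy (hB.connected_induce_compl_triple hmin.1 hS hx hy),
    fun _ hf => hmin.not_threeConnected_contractEdge_deleteEdges hxy hx hy hf⟩
end

section
/- Let m ≥ 1 be an integer and let G be a finite graph. Then any two distinct maximal subsets of V(G) inducing m-tree-connected subgraphs are disjoint; consequently, V(G) can be expressed uniquely (up to order) as a disjoint union of vertex sets of maximal induced m-tree-connected subgraphs of G. -/
theorem Set.sym2_mono {α : Type*} {s t : Set α} (h : s ⊆ t) : s.sym2 ⊆ t.sym2 :=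
  fun _ hz => Set.mem_sym2_iff_subset.2 ((Set.mem_sym2_iff_subset.1 hz).trans h)

namespace SimpleGraph

variable {V ι : Type*} {G : SimpleGraph V}

/-- For nonempty `C`, `G.induce C` is `m`-tree-connected iff such a family indexed by `Fin m`
exists; this form lives on `V` and avoids the subtype `C`. -/
def IsDisjointConnectingFamily (G : SimpleGraph V) (C : Set V) (F : ι → SimpleGraph V) : Prop :=
  (∀ i, F i ≤ G) ∧ (∀ i, (F i).edgeSet ⊆ C.sym2) ∧
    (∀ i, ∀ x ∈ C, ∀ y ∈ C, (F i).Reachable x y) ∧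
    Pairwise fun i j => Disjoint (F i).edgeSet (F j).edgeSet

theorem TreeConnected.exists_isDisjointConnectingFamily {m : ℕ} {C : Set V}
    (h : TreeConnected m (G.induce C)) :
    ∃ F : Fin m → SimpleGraph V, IsDisjointConnectingFamily G C F := by
  obtain ⟨T, hle, htree, hdisj⟩ := h
  let f := Function.Embedding.subtype (· ∈ C)
  refine ⟨fun i => (T i).map f, fun i => (map_le_iff_le_comap f _ _).2 (hle i), fun i => ?_,
    fun i x hx y hy => ?_, fun i j hij => ?_⟩
  · rw [edgeSet_map]
    rintro _ ⟨z, -, rfl⟩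
    rw [Set.mem_sym2_iff_subset]
    rintro _ hv
    obtain ⟨a, -, rfl⟩ := Sym2.mem_map.1 hv
    exact a.2
  · exact ((htree i).connected.preconnected ⟨x, hx⟩ ⟨y, hy⟩).map (Embedding.map f _).toHom
  · simp only [edgeSet_map]
    exact (Set.disjoint_image_iff (Sym2.map.injective f.injective)).2 (hdisj hij)

theorem Walk.support_subset_of_edgeSet_subset_sym2 {C : Set V} (hG : G.edgeSet ⊆ C.sym2)
    {x y : V} (p : G.Walk x y) (hx : x ∈ C) : ∀ v ∈ p.support, v ∈ C := by
  induction p with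
  | nil => simpa using hx
  | cons h p ih =>
    simpa [hx] using ih (Set.mk_mem_sym2_iff.1 (hG h)).2

theorem IsDisjointConnectingFamily.treeConnected {m : ℕ} {C : Set V} (hC : C.Nonempty)
    {F : Fin m → SimpleGraph V} (hF : IsDisjointConnectingFamily G C F) :
    TreeConnected m (G.induce C) := by
  obtain ⟨hle, hsym2, hreach, hdisj⟩ := hF
  have : Nonempty C := hC.to_subtype
  have hconn : ∀ i, ((F i).induce C).Connected := fun i => by
    refine Connected.mk fun x y => ?_
    obtain ⟨p⟩ := hreach i x x.2 y y.2
    exact ⟨p.induce C (Walk.support_subset_of_edgeSet_subset_sym2 (hsym2 i) p x.2)⟩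
  choose T hTle hT using fun i => (hconn i).exists_isTree_le
  refine ⟨T, fun i => (hTle i).trans fun _ _ h => hle i h, hT, fun i j hij => ?_⟩
  refine Set.disjoint_left.2 fun e hi hj => ?_
  induction e using Sym2.ind with
  | _ x y =>
    have hxy : s(x.1, y.1) ∈ (F i).edgeSet := hTle i hi
    exact Set.disjoint_left.1 (hdisj hij) hxy (hTle j hj)

theorem Reachable.exists_reachable_deleteEdges_sym2 {A : Set V} {x y : V} (h : G.Reachable x y)
    (hy : y ∈ A) : ∃ a ∈ A, (G.deleteEdges A.sym2).Reachable x a := by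
  obtain ⟨p⟩ := h
  induction p with
  | nil => exact ⟨_, hy, .rfl⟩
  | @cons x z y hxz p ih =>
    by_cases hx : x ∈ A
    · exact ⟨x, hx, .rfl⟩
    · obtain ⟨a, ha, hza⟩ := ih hy
      have hxz' : (G.deleteEdges A.sym2).Adj x z := by simp [hxz, hx]
      exact ⟨a, ha, hxz'.reachable.trans hza⟩

/-- The edges of `S i` inside `A` are discarded to keep the family disjoint from `T`; a path of
`S i` from a vertex of `B` reaches `A` before using any of them. -/
theorem IsDisjointConnectingFamily.union {A B : Set V} {T S : ι → SimpleGraph V}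
    (hT : IsDisjointConnectingFamily G A T) (hS : IsDisjointConnectingFamily G B S)
    (hAB : (A ∩ B).Nonempty) :
    IsDisjointConnectingFamily G (A ∪ B) fun i => T i ⊔ (S i).deleteEdges A.sym2 := by
  obtain ⟨hTle, hTA, hTreach, hTdisj⟩ := hT
  obtain ⟨hSle, hSB, hSreach, hSdisj⟩ := hS
  obtain ⟨v, hvA, hvB⟩ := hAB
  have hreach_v : ∀ i, ∀ x ∈ A ∪ B, (T i ⊔ (S i).deleteEdges A.sym2).Reachable x v := by
    rintro i x (hx | hx)
    · exact (hTreach i x hx v hvA).mono le_sup_left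
    · obtain ⟨a, ha, hxa⟩ := (hSreach i x hx v hvB).exists_reachable_deleteEdges_sym2 hvA
      exact (hxa.mono le_sup_right).trans ((hTreach i a ha v hvA).mono le_sup_left)
  refine ⟨fun i => sup_le (hTle i) ((deleteEdges_le _).trans (hSle i)), fun i => ?_,
    fun i x hx y hy => (hreach_v i x hx).trans (hreach_v i y hy).symm, fun i j hij => ?_⟩
  · rw [edgeSet_sup, edgeSet_deleteEdges]
    exact Set.union_subset ((hTA i).trans (Set.sym2_mono Set.subset_union_left))
      (Set.sdiff_subset.trans ((hSB i).trans (Set.sym2_mono Set.subset_union_right)))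
  · simp only [edgeSet_sup, edgeSet_deleteEdges, Set.disjoint_union_left, Set.disjoint_union_right]
    exact ⟨⟨hTdisj hij, Set.disjoint_sdiff_left.mono_right (hTA j)⟩,
      Set.disjoint_sdiff_right.mono_left (hTA i), (hSdisj hij).mono Set.sdiff_subset Set.sdiff_subset⟩

theorem TreeConnected.induce_union {m : ℕ} {A B : Set V} (hA : TreeConnected m (G.induce A))
    (hB : TreeConnected m (G.induce B)) (hAB : (A ∩ B).Nonempty) :
    TreeConnected m (G.induce (A ∪ B)) := by
  obtain ⟨T, hT⟩ := hA.exists_isDisjointConnectingFamily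
  obtain ⟨S, hS⟩ := hB.exists_isDisjointConnectingFamily
  exact (hT.union hS hAB).treeConnected (hAB.mono (Set.inter_subset_left.trans Set.subset_union_left))

theorem treeConnected_induce_singleton (G : SimpleGraph V) (m : ℕ) (v : V) :
    TreeConnected m (G.induce {v}) :=
  IsDisjointConnectingFamily.treeConnected (Set.singleton_nonempty v) (F := fun _ => ⊥)
    ⟨fun _ => bot_le, fun _ => by simp, fun _ x hx y hy => by simp_all, fun _ _ _ => by simp⟩

theorem IsMaxTCSet.disjoint {m : ℕ} {A B : Set V} (hA : IsMaxTCSet m G A) (hB : IsMaxTCSet m G B)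
    (hne : A ≠ B) : Disjoint A B := by
  by_contra h
  have hU := hA.1.induce_union hB.1 (Set.not_disjoint_iff_nonempty_inter.1 h)
  exact hne ((hA.2 _ Set.subset_union_left hU).symm.trans (hB.2 _ Set.subset_union_right hU))

theorem TreeConnected.exists_isMaxTCSet_superset [Finite V] {m : ℕ} {A : Set V}
    (h : TreeConnected m (G.induce A)) : ∃ B, A ⊆ B ∧ IsMaxTCSet m G B := by
  obtain ⟨B, hAB, hmax⟩ :=
    Finite.exists_le_maximal (p := fun B : Set V => TreeConnected m (G.induce B)) h
  exact ⟨B, hAB, hmax.prop, fun C hBC hC => hmax.eq_of_superset hC hBC⟩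

end SimpleGraph

open SimpleGraph in
theorem statement11_general {V : Type} [Finite V] (G : SimpleGraph V) (m : ℕ) :
    (∀ A B : Set V, IsMaxTCSet m G A → IsMaxTCSet m G B → A ≠ B → Disjoint A B) ∧
    (∀ v : V, ∃ A : Set V, IsMaxTCSet m G A ∧ v ∈ A) := by
  refine ⟨fun A B hA hB hne => hA.disjoint hB hne, fun v => ?_⟩
  obtain ⟨A, hvA, hA⟩ := (treeConnected_induce_singleton G m v).exists_isMaxTCSet_superset
  exact ⟨A, hA, hvA rfl⟩

open SimpleGraph in
/-- For `m ≥ 1` and a finite graph `G`, any two distinct maximal subsets of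
`V(G)` inducing `m`-tree-connected subgraphs are disjoint; consequently, the vertex set of
`G` is the disjoint union of the maximal `m`-tree-connected induced subgraphs' vertex sets
(every vertex lies in exactly one such maximal set). -/
theorem statement11 {V : Type} [Finite V] (G : SimpleGraph V) (m : ℕ) (hm : 1 ≤ m) :
    (∀ A B : Set V, IsMaxTCSet m G A → IsMaxTCSet m G B → A ≠ B → Disjoint A B) ∧
    (∀ v : V, ∃ A : Set V, IsMaxTCSet m G A ∧ v ∈ A) :=
  statement11_general G m
end

section
/- Let G be a finite graph and let A and B be two distinct maximal subsets of V(G) each inducing a 2-tree-connected subgraph of G (i.e., A and B are vertex sets of two distinct 2-tree-connected components of G). Then at most one edge of G joins a vertex of A to a vertex of B. -/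
/-! If `G[A]` and `G[B]` are 2-tree-connected and either share a vertex or are joined by two
distinct edges, then `G[A ∪ B]` is 2-tree-connected, so maximality forces `A = A ∪ B = B`.
Let `T₁, T₂` and `S₁, S₂` be edge-disjoint spanning trees of `G[A]` and `G[B]`. If `A` and `B`
meet, `Tᵢ ∪ (Sᵢ \ T₃₋ᵢ)` are edge-disjoint and connected: walking along `Sᵢ` from a vertex
of `B`, every edge used before the walk first enters `A` has an end outside `A`, so it is not an
edge of `T₃₋ᵢ`. If `A` and `B` are disjoint and joined by edges `e₁ ≠ e₂`, take
`Tᵢ ∪ Sᵢ ∪ {eᵢ}`. Spanning trees of these two connected graphs finish the proof. -/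

namespace SimpleGraph

variable {V X : Type*}

theorem treeConnected_two_iff {H : SimpleGraph X} :
    TreeConnected 2 H ↔ ∃ F₁ F₂ : SimpleGraph X,
      F₁ ≤ H ∧ F₂ ≤ H ∧ F₁.Connected ∧ F₂.Connected ∧ Disjoint F₁ F₂ := by
  constructor
  · rintro ⟨T, hle, htree, hdisj⟩
    exact ⟨T 0, T 1, hle 0, hle 1, (htree 0).connected, (htree 1).connected,
      disjoint_edgeSet.mp (hdisj (by decide))⟩
  · rintro ⟨F₁, F₂, hF₁, hF₂, hc₁, hc₂, hdisj⟩
    obtain ⟨T₁, hT₁, htree₁⟩ := hc₁.exists_isTree_le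
    obtain ⟨T₂, hT₂, htree₂⟩ := hc₂.exists_isTree_le
    have hT : Disjoint T₁.edgeSet T₂.edgeSet := disjoint_edgeSet.mpr (hdisj.mono hT₁ hT₂)
    refine ⟨![T₁, T₂], ?_, ?_, ?_⟩
    · intro i
      fin_cases i
      exacts [hT₁.trans hF₁, hT₂.trans hF₂]
    · intro i
      fin_cases i
      exacts [htree₁, htree₂]
    · intro i j hij
      fin_cases i <;> fin_cases j <;> simp_all [hT.symm]

theorem Reachable.exists_mem_reachable_sdiff {b c : SimpleGraph X} {P : Set X}
    (hc : c.support ⊆ P) {x r : X} (h : b.Reachable x r) (hr : r ∈ P) :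
    ∃ p ∈ P, (b \ c).Reachable x p := by
  obtain ⟨w⟩ := h
  induction w with
  | nil => exact ⟨_, hr, .rfl⟩
  | @cons u w _ hadj _ ih =>
    by_cases hu : u ∈ P
    · exact ⟨u, hu, .rfl⟩
    obtain ⟨p, hp, hreach⟩ := ih hr
    have hxw : (b \ c).Adj u w := (sdiff_adj _ _ _ _).mpr ⟨hadj, fun hc' => hu (hc ⟨w, hc'⟩)⟩
    exact ⟨p, hp, hxw.reachable.trans hreach⟩

theorem connected_sup_sdiff {a b c : SimpleGraph X} {P Q : Set X}
    (hcover : ∀ x, x ∈ P ∨ x ∈ Q) {r : X} (hr : r ∈ P)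
    (ha : ∀ x ∈ P, a.Reachable x r) (hb : ∀ x ∈ Q, b.Reachable x r) (hc : c.support ⊆ P) :
    (a ⊔ (b \ c)).Connected := by
  have hreach : ∀ x ∈ P, (a ⊔ (b \ c)).Reachable x r := fun x hx => (ha x hx).mono le_sup_left
  refine (connected_iff_exists_forall_reachable _).mpr ⟨r, fun x => ?_⟩
  rcases hcover x with hx | hx
  · exact (hreach x hx).symm
  · obtain ⟨p, hp, hxp⟩ := (hb x hx).exists_mem_reachable_sdiff hc hr
    exact ((hxp.mono le_sup_right).trans (hreach p hp)).symm

theorem connected_sup_sup_edge {a b : SimpleGraph X} {P Q : Set X}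
    (hcover : ∀ x, x ∈ P ∨ x ∈ Q) {p q : X} (hpq : p ≠ q)
    (ha : ∀ x ∈ P, a.Reachable x p) (hb : ∀ x ∈ Q, b.Reachable x q) :
    (a ⊔ b ⊔ edge p q).Connected := by
  have hqp : (a ⊔ b ⊔ edge p q).Reachable q p :=
    Adj.reachable (Or.inr ((edge_adj _ _ _ _).mpr ⟨Or.inr ⟨rfl, rfl⟩, hpq.symm⟩))
  refine (connected_iff_exists_forall_reachable _).mpr ⟨p, fun x => ?_⟩
  rcases hcover x with hx | hx
  · exact ((ha x hx).mono (le_sup_left.trans le_sup_left)).symm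
  · exact (((hb x hx).mono (le_sup_right.trans le_sup_left)).trans hqp).symm

theorem disjoint_sup_edge_sup_edge {g₁ g₂ : SimpleGraph X} {u₁ v₁ u₂ v₂ : X}
    (hg : Disjoint g₁ g₂) (h₁ : ¬ g₁.Adj u₂ v₂) (h₂ : ¬ g₂.Adj u₁ v₁)
    (hne : s(u₁, v₁) ≠ s(u₂, v₂)) :
    Disjoint (g₁ ⊔ edge u₁ v₁) (g₂ ⊔ edge u₂ v₂) := by
  have hedge : ¬ (edge u₁ v₁).Adj u₂ v₂ := fun h => hne ((adj_edge _ _).mp h).1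
  exact disjoint_sup_left.mpr
    ⟨disjoint_sup_right.mpr ⟨hg, (disjoint_edge _).mpr h₁⟩,
      disjoint_sup_right.mpr ⟨((disjoint_edge _).mpr h₂).symm, (disjoint_edge _).mpr hedge⟩⟩

theorem map_disjoint_map_iff (f : V ↪ X) {G₁ G₂ : SimpleGraph V} :
    Disjoint (G₁.map f) (G₂.map f) ↔ Disjoint G₁ G₂ := by
  rw [← disjoint_edgeSet, ← disjoint_edgeSet, edgeSet_map, edgeSet_map,
    Set.disjoint_image_iff f.sym2Map.injective]

section Pushforward

variable {A S : Set V} (h : A ⊆ S)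

theorem map_embeddingOfSubset_le {G : SimpleGraph V} {T : SimpleGraph A}
    (hT : T ≤ G.induce A) : T.map (Set.embeddingOfSubset A S h) ≤ G.induce S :=
  (map_le_iff_le_comap _ _ _).mpr hT

theorem support_map_embeddingOfSubset_subset (T : SimpleGraph A) :
    (T.map (Set.embeddingOfSubset A S h)).support ⊆ Subtype.val ⁻¹' A := by
  rw [support_map]
  rintro _ ⟨y, -, rfl⟩
  exact y.2

theorem Connected.reachable_map_embeddingOfSubset {T : SimpleGraph A} (hT : T.Connected)
    {x y : S} (hx : (x : V) ∈ A) (hy : (y : V) ∈ A) :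
    (T.map (Set.embeddingOfSubset A S h)).Reachable x y :=
  (hT.preconnected ⟨x, hx⟩ ⟨y, hy⟩).map (Embedding.map _ T).toHom

end Pushforward

variable {G : SimpleGraph V} {A B : Set V}

theorem treeConnected_two_induce_union_of_inter_nonempty
    (hA : TreeConnected 2 (G.induce A)) (hB : TreeConnected 2 (G.induce B))
    (hAB : (A ∩ B).Nonempty) : TreeConnected 2 (G.induce (A ∪ B)) := by
  obtain ⟨TA₁, TA₂, hTA₁, hTA₂, hcA₁, hcA₂, hdA⟩ := treeConnected_two_iff.mp hA
  obtain ⟨TB₁, TB₂, hTB₁, hTB₂, hcB₁, hcB₂, hdB⟩ := treeConnected_two_iff.mp hB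
  obtain ⟨r, hrA, hrB⟩ := hAB
  have hsA : A ⊆ A ∪ B := Set.subset_union_left
  have hsB : B ⊆ A ∪ B := Set.subset_union_right
  set ιA := Set.embeddingOfSubset A (A ∪ B) hsA
  set ιB := Set.embeddingOfSubset B (A ∪ B) hsB
  have hconn : ∀ {TA TA' : SimpleGraph A} {TB : SimpleGraph B}, TA.Connected → TB.Connected →
      (TA.map ιA ⊔ (TB.map ιB \ TA'.map ιA)).Connected := fun hcA hcB =>
    connected_sup_sdiff (fun x => x.2) (P := Subtype.val ⁻¹' A) (r := ⟨r, hsA hrA⟩) hrA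
      (fun _ hx => hcA.reachable_map_embeddingOfSubset hsA hx hrA)
      (fun _ hx => hcB.reachable_map_embeddingOfSubset hsB hx hrB)
      (support_map_embeddingOfSubset_subset hsA _)
  have hle : ∀ {TA TA' : SimpleGraph A} {TB : SimpleGraph B}, TA ≤ G.induce A →
      TB ≤ G.induce B → TA.map ιA ⊔ (TB.map ιB \ TA'.map ιA) ≤ G.induce (A ∪ B) :=
    fun hTA hTB => sup_le (map_embeddingOfSubset_le hsA hTA)
      (sdiff_le.trans (map_embeddingOfSubset_le hsB hTB))
  refine treeConnected_two_iff.mpr ⟨TA₁.map ιA ⊔ (TB₁.map ιB \ TA₂.map ιA),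
    TA₂.map ιA ⊔ (TB₂.map ιB \ TA₁.map ιA), hle hTA₁ hTB₁, hle hTA₂ hTB₂,
    hconn hcA₁ hcB₁, hconn hcA₂ hcB₂, ?_⟩
  exact disjoint_sup_left.mpr
    ⟨disjoint_sup_right.mpr ⟨(map_disjoint_map_iff ιA).mpr hdA, disjoint_sdiff_self_right⟩,
      disjoint_sup_right.mpr
        ⟨disjoint_sdiff_self_left, ((map_disjoint_map_iff ιB).mpr hdB).mono sdiff_le sdiff_le⟩⟩

theorem treeConnected_two_induce_union_of_adj_of_adj
    (hA : TreeConnected 2 (G.induce A)) (hB : TreeConnected 2 (G.induce B))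
    (hAB : Disjoint A B) {a₁ a₂ b₁ b₂ : V} (ha₁ : a₁ ∈ A) (ha₂ : a₂ ∈ A) (hb₁ : b₁ ∈ B)
    (hb₂ : b₂ ∈ B) (h₁ : G.Adj a₁ b₁) (h₂ : G.Adj a₂ b₂) (hne : s(a₁, b₁) ≠ s(a₂, b₂)) :
    TreeConnected 2 (G.induce (A ∪ B)) := by
  obtain ⟨TA₁, TA₂, hTA₁, hTA₂, hcA₁, hcA₂, hdA⟩ := treeConnected_two_iff.mp hA
  obtain ⟨TB₁, TB₂, hTB₁, hTB₂, hcB₁, hcB₂, hdB⟩ := treeConnected_two_iff.mp hB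
  have hsA : A ⊆ A ∪ B := Set.subset_union_left
  have hsB : B ⊆ A ∪ B := Set.subset_union_right
  set ιA := Set.embeddingOfSubset A (A ∪ B) hsA
  set ιB := Set.embeddingOfSubset B (A ∪ B) hsB
  have hsuppA := support_map_embeddingOfSubset_subset hsA
  have hsuppB := support_map_embeddingOfSubset_subset hsB
  have hPQ : Disjoint (Subtype.val ⁻¹' A : Set ↥(A ∪ B)) (Subtype.val ⁻¹' B) := hAB.preimage _
  have hle : ∀ {TA : SimpleGraph A} {TB : SimpleGraph B} {a b : V} (ha : a ∈ A) (hb : b ∈ B),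
      TA ≤ G.induce A → TB ≤ G.induce B → G.Adj a b →
      TA.map ιA ⊔ TB.map ιB ⊔ edge ⟨a, hsA ha⟩ ⟨b, hsB hb⟩ ≤ G.induce (A ∪ B) :=
    fun _ _ hTA hTB hab => sup_le (sup_le (map_embeddingOfSubset_le hsA hTA)
      (map_embeddingOfSubset_le hsB hTB)) ((edge_le_iff _).mpr (.inr hab))
  have hconn : ∀ {TA : SimpleGraph A} {TB : SimpleGraph B} {a b : V} (ha : a ∈ A) (hb : b ∈ B),
      TA.Connected → TB.Connected → G.Adj a b →
      (TA.map ιA ⊔ TB.map ιB ⊔ edge ⟨a, hsA ha⟩ ⟨b, hsB hb⟩).Connected :=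
    fun ha hb hcA hcB hab => connected_sup_sup_edge (fun x => x.2)
      (fun h => hab.ne (congrArg Subtype.val h))
      (fun _ hx => hcA.reachable_map_embeddingOfSubset hsA hx ha)
      (fun _ hx => hcB.reachable_map_embeddingOfSubset hsB hx hb)
  have hcross : ∀ (TA : SimpleGraph A) (TB : SimpleGraph B) {x y : ↥(A ∪ B)},
      (x : V) ∈ A → (y : V) ∈ B → ¬ (TA.map ιA ⊔ TB.map ιB).Adj x y := by
    rintro TA TB x y hx hy (h | h)
    · exact Set.disjoint_left.mp hPQ (hsuppA TA ⟨x, h.symm⟩) hy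
    · exact Set.disjoint_left.mp hPQ hx (hsuppB TB ⟨y, h⟩)
  have hAB' : ∀ (TA : SimpleGraph A) (TB : SimpleGraph B), Disjoint (TA.map ιA) (TB.map ιB) :=
    fun TA TB => disjoint_of_disjoint_support _ (hPQ.mono (hsuppA TA) (hsuppB TB))
  have hdisj : Disjoint (TA₁.map ιA ⊔ TB₁.map ιB) (TA₂.map ιA ⊔ TB₂.map ιB) :=
    disjoint_sup_left.mpr
      ⟨disjoint_sup_right.mpr ⟨(map_disjoint_map_iff ιA).mpr hdA, hAB' _ _⟩,
        disjoint_sup_right.mpr ⟨(hAB' _ _).symm, (map_disjoint_map_iff ιB).mpr hdB⟩⟩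
  refine treeConnected_two_iff.mpr ⟨_, _, hle ha₁ hb₁ hTA₁ hTB₁ h₁, hle ha₂ hb₂ hTA₂ hTB₂ h₂,
    hconn ha₁ hb₁ hcA₁ hcB₁ h₁, hconn ha₂ hb₂ hcA₂ hcB₂ h₂,
    disjoint_sup_edge_sup_edge hdisj (hcross _ _ ha₂ hb₂) (hcross _ _ ha₁ hb₁) fun h => hne ?_⟩
  simpa using congrArg (Sym2.map Subtype.val) h

theorem IsMaxTCSet.eq_of_treeConnected_union {m : ℕ} (hA : IsMaxTCSet m G A)
    (hB : IsMaxTCSet m G B) (hAB : TreeConnected m (G.induce (A ∪ B))) : A = B :=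
  (hA.2 _ Set.subset_union_left hAB).symm.trans (hB.2 _ Set.subset_union_right hAB)

end SimpleGraph

open SimpleGraph in
theorem statement12_general {V : Type} (G : SimpleGraph V) (A B : Set V)
    (hA : IsMaxTCSet 2 G A) (hB : IsMaxTCSet 2 G B) (hAB : A ≠ B) :
    {e ∈ G.edgeSet | ∃ a ∈ A, ∃ b ∈ B, e = s(a, b)}.ncard ≤ 1 := by
  by_contra! hcard
  obtain ⟨_, ⟨h₁, a₁, ha₁, b₁, hb₁, rfl⟩, _, ⟨h₂, a₂, ha₂, b₂, hb₂, rfl⟩, hne⟩ :=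
    (Set.one_lt_ncard_iff_nontrivial_and_finite.mp hcard).1
  refine hAB (hA.eq_of_treeConnected_union hB ?_)
  rcases Set.disjoint_or_nonempty_inter A B with hd | hi
  · exact treeConnected_two_induce_union_of_adj_of_adj hA.1 hB.1 hd ha₁ ha₂ hb₁ hb₂ h₁ h₂ hne
  · exact treeConnected_two_induce_union_of_inter_nonempty hA.1 hB.1 hi

open SimpleGraph in
/-- If `A` and `B` are vertex sets of two distinct 2-tree-connected
components of a finite graph `G`, then at most one edge of `G` joins a vertex of `A` to a
vertex of `B`. -/
theorem statement12 {V : Type} [Finite V] (G : SimpleGraph V) (A B : Set V)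
    (hA : IsMaxTCSet 2 G A) (hB : IsMaxTCSet 2 G B) (hAB : A ≠ B) :
    {e ∈ G.edgeSet | ∃ a ∈ A, ∃ b ∈ B, e = s(a, b)}.ncard ≤ 1 :=
  statement12_general G A B hA hB hAB
end

section
/- Let G be a 5-connected finite simple graph. Then for every vertex v of G, the graph G − v obtained by deleting v has two edge-disjoint spanning trees (i.e., G − v is 2-tree-connected, and hence Ω(G − v) = 1). -/
/-!
Let `H = G - v`. An edge cut of `H` with at most three edges is impossible: if its side `U` has
at least four vertices, then `v` together with the tails in `U` of the cut edges is a set of at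
most four vertices separating `G`; if `U` is smaller, a vertex of `U` has at most `|U| - 1` of
its at least four neighbours in `H` inside `U`, which yields at least four cut edges. So `H` is
4-edge-connected, and the weak form of the Nash-Williams–Tutte theorem (a `2k`-edge-connected
graph has `k` edge-disjoint spanning trees) applies with `k = 2`.

For that theorem we follow Diestel: take `k` edge-disjoint forests with the largest total number
of edges, and let `E'` consist of the edges left unused by some family that is reachable from
them by exchanges (replace an edge `e` of one forest by an unused edge `xy` of `H` such that `e`
lies on the forest path from `x` to `y`). Maximality shows that every edge of `E'` joins two
vertices that are connected inside each forest restricted to `E'`, and this is preserved by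
exchanges. If `(V, E')` had `r ≥ 2` components, at least `k r` edges of `H` would run between
them; they all lie in the forests, while each forest can hold at most `r - 1` of them. Hence
`(V, E')` is connected and the forests are spanning trees. A 2-tree-connected graph is its own
unique maximal 2-tree-connected part, so `Ω(H) = 1`.
-/

namespace SimpleGraph

variable {V ι W : Type*}

section Forest

variable {K M : SimpleGraph V} {a b u w x y : V}

lemma Reachable.of_forall_adj (h : ∀ ⦃c d⦄, K.Adj c d → M.Reachable c d)
    (hr : K.Reachable u w) : M.Reachable u w := by
  obtain ⟨p⟩ := hr
  induction p with
  | nil => rfl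
  | cons hadj _ ih => exact (h hadj).trans ih

lemma Walk.reachable_deleteEdges_or (p : K.Walk u w) :
    (K.deleteEdges {s(a, b)}).Reachable u w ∨ (K.deleteEdges {s(a, b)}).Reachable u a ∨
      (K.deleteEdges {s(a, b)}).Reachable u b := by
  induction p with
  | nil => exact Or.inl .rfl
  | @cons u v w hadj _ ih =>
    by_cases h : s(u, v) = s(a, b)
    · rcases Sym2.eq_iff.mp h with ⟨rfl, -⟩ | ⟨rfl, -⟩
      · exact Or.inr (Or.inl .rfl)
      · exact Or.inr (Or.inr .rfl)
    · have hstep : (K.deleteEdges {s(a, b)}).Reachable u v :=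
        (deleteEdges_adj.mpr ⟨hadj, h⟩).reachable
      exact ih.imp hstep.trans (Or.imp hstep.trans hstep.trans)

lemma card_connectedComponent_deleteEdges_of_isBridge [Finite V] (hab : K.Adj a b)
    (hbr : K.IsBridge s(a, b)) :
    Nat.card (K.deleteEdges {s(a, b)}).ConnectedComponent = Nat.card K.ConnectedComponent + 1 := by
  set K' := K.deleteEdges {s(a, b)}
  have hbij : Set.BijOn (ConnectedComponent.map (Hom.ofLE (deleteEdges_le _)))
      {K'.connectedComponentMk b}ᶜ Set.univ := by
    refine ⟨fun _ _ => trivial, ?_, ?_⟩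
    · intro c hc d hd hcd
      induction c using ConnectedComponent.ind with | h u => ?_
      induction d using ConnectedComponent.ind with | h w => ?_
      obtain ⟨p⟩ := ConnectedComponent.exact hcd
      refine ConnectedComponent.sound ?_
      rcases p.reachable_deleteEdges_or (a := a) (b := b) with h | hua | hub
      · exact h
      · rcases p.reverse.reachable_deleteEdges_or (a := a) (b := b) with h | hwa | hwb
        · exact h.symm
        · exact hua.trans hwa.symm
        · exact absurd (ConnectedComponent.sound hwb) hd
      · exact absurd (ConnectedComponent.sound hub) hc
    · intro c _
      induction c using ConnectedComponent.ind with | h u => ?_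
      by_cases hub : K'.Reachable u b
      · refine ⟨K'.connectedComponentMk a, fun h => hbr (ConnectedComponent.exact h), ?_⟩
        exact ConnectedComponent.sound (hab.reachable.trans (hub.mono (deleteEdges_le _)).symm)
      · exact ⟨K'.connectedComponentMk u, fun h => hub (ConnectedComponent.exact h), rfl⟩
  have := Set.ncard_add_ncard_compl {K'.connectedComponentMk b}
  rw [hbij.ncard_eq, Set.ncard_univ, Set.ncard_singleton] at this
  omega

lemma IsAcyclic.ncard_edgeSet_add_card_connectedComponent [Finite V] (hK : K.IsAcyclic) :
    K.edgeSet.ncard + Nat.card K.ConnectedComponent = Nat.card V := by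
  induction h : K.edgeSet.ncard generalizing K with
  | zero =>
    obtain rfl : K = ⊥ := edgeSet_eq_empty.mp ((Set.ncard_eq_zero).mp h)
    rw [zero_add, ← Nat.card_eq_of_bijective (⊥ : SimpleGraph V).connectedComponentMk
      ⟨fun _ _ h => reachable_bot.mp (ConnectedComponent.exact h), fun c => c.exists_rep⟩]
  | succ m ih =>
    obtain ⟨e, he⟩ : K.edgeSet.Nonempty := Set.nonempty_of_ncard_ne_zero (by omega)
    induction e with | h a b => ?_
    have hcard : (K.deleteEdges {s(a, b)}).edgeSet.ncard = m := by
      rw [edgeSet_deleteEdges, Set.ncard_sdiff_singleton_of_mem he]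
      omega
    have := ih (hK.anti (deleteEdges_le _)) hcard
    rw [card_connectedComponent_deleteEdges_of_isBridge he
      (isAcyclic_iff_forall_isBridge.mp hK he)] at this
    omega

lemma IsAcyclic.not_reachable_deleteEdges (hK : K.IsAcyclic) {p : K.Walk u w} (hp : p.IsPath)
    {e : Sym2 V} (he : e ∈ p.edges) : ¬ (K.deleteEdges {e}).Reachable u w := by
  classical
  rintro ⟨q⟩
  let q' : K.Walk u w := q.mapLe (deleteEdges_le _)
  have hq' : e ∉ q'.edges := by
    intro h
    have := q.edges_subset_edgeSet (by simpa [q'] using h)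
    simp at this
  have := (hK.subsingleton_path u w).elim ⟨p, hp⟩ q'.toPath
  exact hq' (q'.edges_toPath_subset_edges (by rwa [← this]))

lemma edgeSet_sup_edge (hxy : x ≠ y) :
    (K ⊔ edge x y).edgeSet = insert s(x, y) K.edgeSet := by
  rw [edgeSet_sup, edgeSet_edge_of_ne hxy, Set.union_singleton]

lemma edgeSet_sup_edge_subset (K : SimpleGraph V) (x y : V) :
    (K ⊔ edge x y).edgeSet ⊆ insert s(x, y) K.edgeSet := by
  rw [edgeSet_sup, Set.insert_eq, Set.union_comm]
  exact Set.union_subset_union_left _ edgeSet_edge_subset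

end Forest

section Boundary

variable {H K : SimpleGraph V}

def dartBoundary (H : SimpleGraph V) (U : Set V) : Set (V × V) :=
  {p | H.Adj p.1 p.2 ∧ p.1 ∈ U ∧ p.2 ∉ U}

theorem isEdgeConnected_iff_le_encard_dartBoundary {k : ℕ} :
    H.IsEdgeConnected k ↔
      ∀ U : Set V, U.Nonempty → U ≠ Set.univ → k ≤ (H.dartBoundary U).encard := by
  constructor
  · intro hH U ⟨u, hu⟩ hU
    obtain ⟨w, hw⟩ := (Set.ne_univ_iff_exists_notMem U).mp hU
    by_contra! hlt
    obtain ⟨p⟩ := hH u w ((Set.encard_image_le (fun q : V × V => s(q.1, q.2)) _).trans_lt hlt)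
    obtain ⟨d, -, hd, hd'⟩ := p.exists_boundary_dart U hu hw
    obtain ⟨hadj, hdel⟩ := deleteEdges_adj.mp d.adj
    exact hdel ⟨d.toProd, ⟨hadj, hd, hd'⟩, rfl⟩
  · intro h u w S hS
    by_contra hnr
    let U := {x | (H.deleteEdges S).Reachable u x}
    have hle := h U ⟨u, .rfl⟩ fun hU => hnr (hU ▸ Set.mem_univ w : w ∈ U)
    refine (hle.trans_lt (lt_of_le_of_lt ?_ hS)).false
    refine Set.encard_le_encard_of_injOn (f := fun q : V × V => s(q.1, q.2)) ?_ ?_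
    · rintro ⟨a, b⟩ ⟨hab, ha, hb⟩
      by_contra hS'
      exact hb (ha.trans (deleteEdges_adj.mpr ⟨hab, hS'⟩).reachable)
    · rintro ⟨a, b⟩ ⟨-, ha, hb⟩ ⟨a', b'⟩ ⟨-, ha', hb'⟩ h
      rcases Sym2.eq_iff.mp h with ⟨rfl, rfl⟩ | ⟨rfl, rfl⟩
      · rfl
      · exact absurd ha hb'

lemma ncard_neighborSet_le_ncard_dartBoundary_inter [Finite V] (K : SimpleGraph V) {U : Set V}
    {u : V} (hu : u ∈ U) :
    (K.neighborSet u).ncard ≤ (K.dartBoundary U ∩ {p | p.1 = u}).ncard + (U.ncard - 1) := by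
  have hsub : K.neighborSet u ⊆ Prod.snd '' (K.dartBoundary U ∩ {p | p.1 = u}) ∪ U \ {u} := by
    intro w hw
    by_cases hwU : w ∈ U
    · exact Or.inr ⟨hwU, (K.ne_of_adj hw).symm⟩
    · exact Or.inl ⟨(u, w), ⟨⟨hw, hu, hwU⟩, rfl⟩, rfl⟩
  rw [← Set.ncard_sdiff_singleton_of_mem hu]
  exact (Set.ncard_le_ncard hsub).trans ((Set.ncard_union_le _ _).trans
    (Nat.add_le_add_right Set.ncard_image_le _))

lemma four_le_ncard_dartBoundary_of_ncard_lt_four [Finite V]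
    (hK : ∀ u, 4 ≤ (K.neighborSet u).ncard) {U : Set V} (hU : U.Nonempty) (hU4 : U.ncard < 4) :
    4 ≤ (K.dartBoundary U).ncard := by
  set B := K.dartBoundary U with hBdef
  have hout : ∀ u ∈ U, 5 - U.ncard ≤ (B ∩ {p | p.1 = u}).ncard := fun u hu => by
    have := K.ncard_neighborSet_le_ncard_dartBoundary_inter hu
    rw [← hBdef] at this
    have := hK u
    have := (Set.ncard_pos (Set.toFinite U)).mpr ⟨u, hu⟩
    omega
  obtain ⟨u, hu⟩ := hU
  rcases le_or_gt U.ncard 1 with hone | htwo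
  · have := (hout u hu).trans (Set.ncard_le_ncard Set.inter_subset_left)
    omega
  obtain ⟨u₁, hu₁, u₂, hu₂, hne⟩ := (Set.one_lt_ncard (Set.toFinite U)).mp htwo
  have hdisj : Disjoint (B ∩ {p | p.1 = u₁}) (B ∩ {p | p.1 = u₂}) :=
    Set.disjoint_left.mpr fun p hp hp' => hne (hp.2.symm.trans hp'.2)
  have : (B ∩ {p | p.1 = u₁} ∪ B ∩ {p | p.1 = u₂}).ncard ≤ B.ncard :=
    Set.ncard_le_ncard (Set.union_subset Set.inter_subset_left Set.inter_subset_left)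
  rw [Set.ncard_union_eq hdisj] at this
  have := hout u₁ hu₁
  have := hout u₂ hu₂
  omega

lemma ncard_setOf_adj [Finite V] (K : SimpleGraph V) :
    {p : V × V | K.Adj p.1 p.2}.ncard = 2 * K.edgeSet.ncard := by
  classical
  cases nonempty_fintype V
  rw [Set.ncard_eq_toFinset_card', Set.ncard_eq_toFinset_card', ← edgeFinset,
    two_mul_card_edgeFinset]
  congr 1
  ext p
  simp

lemma IsEdgeConnected.mul_card_connectedComponent_le [Finite V] {m : ℕ}
    (hH : H.IsEdgeConnected m) (hK : ¬ K.Preconnected) :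
    m * Nat.card K.ConnectedComponent ≤ 2 * (H.edgeSet \ K.edgeSet).ncard := by
  have := Fintype.ofFinite K.ConnectedComponent
  have hcut (c : K.ConnectedComponent) : m ≤ (H.dartBoundary c.supp).ncard := by
    have hne : c.supp ≠ Set.univ := fun hc =>
      hK fun u w => c.reachable_of_mem_supp (hc ▸ Set.mem_univ u) (hc ▸ Set.mem_univ w)
    have := isEdgeConnected_iff_le_encard_dartBoundary.mp hH c.supp c.nonempty_supp hne
    rwa [← (Set.toFinite _).cast_ncard_eq, Nat.cast_le] at this
  have hdisj : Pairwise (Function.onFun Disjoint fun c : K.ConnectedComponent =>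
      H.dartBoundary c.supp) := by
    intro c c' hcc'
    refine Set.disjoint_left.mpr fun p hp hp' => hcc' ?_
    rw [← (ConnectedComponent.mem_supp_iff _ _).mp hp.2.1,
      ← (ConnectedComponent.mem_supp_iff _ _).mp hp'.2.1]
  have hsub : (⋃ c : K.ConnectedComponent, H.dartBoundary c.supp) ⊆
      {p : V × V | (H \ K).Adj p.1 p.2} := by
    rintro p ⟨-, ⟨c, rfl⟩, hab, ha, hb⟩
    exact ⟨hab, fun h => hb (c.mem_supp_congr_adj h |>.mp ha)⟩
  calc m * Nat.card K.ConnectedComponent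
      = ∑ _c : K.ConnectedComponent, m := by simp [mul_comm]
    _ ≤ ∑ c : K.ConnectedComponent, (H.dartBoundary c.supp).ncard :=
      Finset.sum_le_sum fun c _ => hcut c
    _ = (⋃ c : K.ConnectedComponent, H.dartBoundary c.supp).ncard := by
      rw [Set.ncard_iUnion_of_finite (fun _ => Set.toFinite _) hdisj, finsum_eq_sum_of_fintype]
    _ ≤ 2 * (H.edgeSet \ K.edgeSet).ncard := by
      rw [← edgeSet_sdiff, ← ncard_setOf_adj]
      exact Set.ncard_le_ncard hsub

end Boundary

section TreePacking

variable {H : SimpleGraph V} {F F' F₀ : ι → SimpleGraph V} {x y u w : V} {e : Sym2 V}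

structure IsForestFamily (H : SimpleGraph V) (F : ι → SimpleGraph V) : Prop where
  le : ∀ i, F i ≤ H
  isAcyclic : ∀ i, (F i).IsAcyclic
  pairwise_disjoint : Pairwise fun i j => Disjoint (F i).edgeSet (F j).edgeSet

noncomputable def totalEdges [Fintype ι] (F : ι → SimpleGraph V) : ℕ :=
  ∑ i, (F i).edgeSet.ncard

variable [DecidableEq ι]

lemma IsForestFamily.update (hF : IsForestFamily H F) {i : ι} {A : SimpleGraph V} (hAH : A ≤ H)
    (hA : A.IsAcyclic) (hAF : A.edgeSet ⊆ insert s(x, y) (F i).edgeSet)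
    (hxy : ∀ j, s(x, y) ∉ (F j).edgeSet) : IsForestFamily H (Function.update F i A) where
  le j := by rcases eq_or_ne j i with rfl | hj <;> simp [*, hF.le]
  isAcyclic j := by rcases eq_or_ne j i with rfl | hj <;> simp [*, hF.isAcyclic]
  pairwise_disjoint := by
    have hdisj : ∀ j ≠ i, Disjoint A.edgeSet (F j).edgeSet := fun j hj =>
      Set.disjoint_of_subset_left hAF
        (Set.disjoint_insert_left.mpr ⟨hxy j, hF.pairwise_disjoint hj.symm⟩)
    intro j l hjl
    by_cases hj : j = i
    · subst hj
      simpa [Function.update_of_ne hjl.symm] using hdisj l hjl.symm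
    by_cases hl : l = i
    · subst hl
      simpa [Function.update_of_ne hjl] using (hdisj j hj).symm
    simpa [Function.update_of_ne hj, Function.update_of_ne hl] using hF.pairwise_disjoint hjl

lemma totalEdges_update [Fintype ι] (i : ι) (A : SimpleGraph V) :
    totalEdges (Function.update F i A) + (F i).edgeSet.ncard = totalEdges F + A.edgeSet.ncard := by
  have hf : (fun j => (Function.update F i A j).edgeSet.ncard) =
      Function.update (fun j => (F j).edgeSet.ncard) i A.edgeSet.ncard :=
    funext (Function.apply_update (fun _ B => B.edgeSet.ncard) F i A)
  unfold totalEdges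
  rw [hf, Finset.sum_update_of_mem (Finset.mem_univ i),
    Finset.sum_eq_add_sum_sdiff_singleton_of_mem (Finset.mem_univ i) (fun j => (F j).edgeSet.ncard)]
  ring

-- `¬ ((F i).deleteEdges {e}).Reachable x y`: `e` lies on the path of `F i` from `x` to `y`.
def IsExchange (H : SimpleGraph V) (F F' : ι → SimpleGraph V) : Prop :=
  ∃ i e x y, H.Adj x y ∧ (∀ j, s(x, y) ∉ (F j).edgeSet) ∧ e ∈ (F i).edgeSet ∧
    ¬ ((F i).deleteEdges {e}).Reachable x y ∧
    F' = Function.update F i ((F i).deleteEdges {e} ⊔ edge x y)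

lemma IsForestFamily.notMem_edgeSet_exchange (hF : IsForestFamily H F) {i : ι}
    (he : e ∈ (F i).edgeSet) (hxy : s(x, y) ∉ (F i).edgeSet) (j : ι) :
    e ∉ (Function.update F i ((F i).deleteEdges {e} ⊔ edge x y) j).edgeSet := by
  rcases eq_or_ne j i with rfl | hj
  · rw [Function.update_self]
    intro h
    have := edgeSet_sup_edge_subset _ x y h
    rw [edgeSet_deleteEdges] at this
    rcases this with rfl | ⟨-, h⟩
    · exact hxy he
    · exact h rfl
  · rw [Function.update_of_ne hj]
    exact Set.disjoint_right.mp (hF.pairwise_disjoint hj) he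

-- The graph `(V, E')` of Diestel's proof of the Nash-Williams–Tutte theorem.
def freeGraph (H : SimpleGraph V) (F₀ : ι → SimpleGraph V) : SimpleGraph V :=
  fromEdgeSet {e ∈ H.edgeSet |
    ∃ F, Relation.ReflTransGen (IsExchange H) F₀ F ∧ ∀ j, e ∉ (F j).edgeSet}

lemma mem_edgeSet_freeGraph (hF : Relation.ReflTransGen (IsExchange H) F₀ F)
    (he : e ∈ H.edgeSet) (hunused : ∀ j, e ∉ (F j).edgeSet) :
    e ∈ (H.freeGraph F₀).edgeSet := by
  rw [freeGraph, edgeSet_fromEdgeSet]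
  exact ⟨⟨he, F, hF, hunused⟩, H.not_isDiag_of_mem_edgeSet he⟩

variable [Fintype ι]

structure IsMaxForestFamily (H : SimpleGraph V) (F : ι → SimpleGraph V) : Prop where
  isForestFamily : IsForestFamily H F
  totalEdges_le (F' : ι → SimpleGraph V) : IsForestFamily H F' → totalEdges F' ≤ totalEdges F

variable [Finite V]

lemma IsMaxForestFamily.reachable_of_unused (hF : IsMaxForestFamily H F) (hxy : H.Adj x y)
    (hunused : ∀ j, s(x, y) ∉ (F j).edgeSet) (i : ι) : (F i).Reachable x y := by
  by_contra hnr
  have hF' : IsForestFamily H (Function.update F i (F i ⊔ edge x y)) :=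
    hF.1.update (sup_le (hF.1.le i) ((edge_le_iff H).mpr (Or.inr hxy)))
      ((hF.1.isAcyclic i).sup_edge_of_not_reachable hnr) (edgeSet_sup_edge_subset _ x y) hunused
  have hsize := totalEdges_update (F := F) i (F i ⊔ edge x y)
  rw [edgeSet_sup_edge hxy.ne, Set.ncard_insert_of_notMem (hunused i)] at hsize
  have := hF.2 _ hF'
  omega

lemma IsMaxForestFamily.isExchange (hF : IsMaxForestFamily H F) (hex : IsExchange H F F') :
    IsMaxForestFamily H F' := by
  obtain ⟨i, e, x, y, hxy, hunused, he, hnr, rfl⟩ := hex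
  have hsub : ((F i).deleteEdges {e} ⊔ edge x y).edgeSet ⊆ insert s(x, y) (F i).edgeSet :=
    (edgeSet_sup_edge_subset _ x y).trans
      (Set.insert_subset_insert (edgeSet_mono (deleteEdges_le _)))
  have hF' := hF.1.update (sup_le ((deleteEdges_le _).trans (hF.1.le i))
      ((edge_le_iff H).mpr (Or.inr hxy)))
    (((hF.1.isAcyclic i).anti (deleteEdges_le _)).sup_edge_of_not_reachable hnr) hsub hunused
  have hsize := totalEdges_update (F := F) i ((F i).deleteEdges {e} ⊔ edge x y)
  rw [edgeSet_sup_edge hxy.ne, edgeSet_deleteEdges,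
    Set.ncard_insert_of_notMem (fun h => hunused i h.1), Set.ncard_sdiff_singleton_add_one he]
    at hsize
  exact ⟨hF', fun G hG => (hF.2 G hG).trans (by omega)⟩

lemma IsMaxForestFamily.reflTransGen (hF₀ : IsMaxForestFamily H F₀)
    (hF : Relation.ReflTransGen (IsExchange H) F₀ F) : IsMaxForestFamily H F := by
  induction hF with
  | refl => exact hF₀
  | tail _ hex ih => exact ih.isExchange hex

lemma reachable_inf_freeGraph_of_unused (hF₀ : IsMaxForestFamily H F₀)
    (hF : Relation.ReflTransGen (IsExchange H) F₀ F) (hxy : H.Adj x y)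
    (hunused : ∀ j, s(x, y) ∉ (F j).edgeSet) (i : ι) :
    (F i ⊓ H.freeGraph F₀).Reachable x y := by
  classical
  have hmax := hF₀.reflTransGen hF
  obtain ⟨p, hp⟩ := ((hmax.reachable_of_unused hxy hunused i).some).toPath
  refine ⟨p.transfer _ fun f hf => ?_⟩
  have hfF : f ∈ (F i).edgeSet := p.edges_subset_edgeSet hf
  have hex : IsExchange H F (Function.update F i ((F i).deleteEdges {f} ⊔ edge x y)) :=
    ⟨i, f, x, y, hxy, hunused, hfF, (hmax.1.isAcyclic i).not_reachable_deleteEdges hp hf, rfl⟩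
  rw [edgeSet_inf]
  exact ⟨hfF, mem_edgeSet_freeGraph (hF.tail hex) (edgeSet_mono (hmax.1.le i) hfF)
    (hmax.1.notMem_edgeSet_exchange hfF (hunused i))⟩

lemma reachable_inf_freeGraph_iff_of_isExchange (hF₀ : IsMaxForestFamily H F₀)
    (hF : Relation.ReflTransGen (IsExchange H) F₀ F) (hex : IsExchange H F F') (i : ι) :
    (F i ⊓ H.freeGraph F₀).Reachable u w ↔ (F' i ⊓ H.freeGraph F₀).Reachable u w := by
  have hF' := hF.tail hex
  have hmax := hF₀.reflTransGen hF
  obtain ⟨i₀, e, x, y, hxy, hunused, he, -, rfl⟩ := hex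
  rcases ne_or_eq i i₀ with hi | rfl
  · rw [Function.update_of_ne hi]
  have hE : (Function.update F i ((F i).deleteEdges {e} ⊔ edge x y) i).edgeSet =
      insert s(x, y) ((F i).edgeSet \ {e}) := by
    rw [Function.update_self, edgeSet_sup_edge hxy.ne, edgeSet_deleteEdges]
  constructor
  · refine Reachable.of_forall_adj fun c d hcd => ?_
    by_cases hce : s(c, d) = e
    · subst hce
      exact reachable_inf_freeGraph_of_unused hF₀ hF' (hmax.1.le i hcd.1)
        (hmax.1.notMem_edgeSet_exchange hcd.1 (hunused i)) i
    · refine Adj.reachable ⟨?_, hcd.2⟩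
      rw [← mem_edgeSet, hE]
      exact Or.inr ⟨hcd.1, hce⟩
  · refine Reachable.of_forall_adj fun c d hcd => ?_
    have hcd₁ : s(c, d) ∈ insert s(x, y) ((F i).edgeSet \ {e}) := hE ▸ hcd.1
    rcases hcd₁ with hcd' | ⟨hcdF, -⟩
    · have := reachable_inf_freeGraph_of_unused hF₀ hF hxy hunused i
      rcases Sym2.eq_iff.mp hcd' with ⟨rfl, rfl⟩ | ⟨rfl, rfl⟩
      · exact this
      · exact this.symm
    · exact Adj.reachable ⟨hcdF, hcd.2⟩

lemma reachable_inf_freeGraph_iff (hF₀ : IsMaxForestFamily H F₀)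
    (hF : Relation.ReflTransGen (IsExchange H) F₀ F) (i : ι) :
    (F i ⊓ H.freeGraph F₀).Reachable u w ↔ (F₀ i ⊓ H.freeGraph F₀).Reachable u w := by
  induction hF with
  | refl => rfl
  | tail hF hex ih => exact (reachable_inf_freeGraph_iff_of_isExchange hF₀ hF hex i).symm.trans ih

lemma IsMaxForestFamily.reachable_inf_freeGraph (hF₀ : IsMaxForestFamily H F₀)
    (h : (H.freeGraph F₀).Reachable u w) (i : ι) : (F₀ i ⊓ H.freeGraph F₀).Reachable u w :=
  h.of_forall_adj fun c d hcd => by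
    obtain ⟨⟨hH, F, hF, hunused⟩, -⟩ := hcd
    exact (reachable_inf_freeGraph_iff hF₀ hF i).mp
      (reachable_inf_freeGraph_of_unused hF₀ hF hH hunused i)

lemma IsMaxForestFamily.ncard_edgeSet_sdiff_freeGraph_lt [Nonempty V]
    (hF₀ : IsMaxForestFamily H F₀) (i : ι) :
    ((F₀ i).edgeSet \ (H.freeGraph F₀).edgeSet).ncard <
      Nat.card (H.freeGraph F₀).ConnectedComponent := by
  have hcc : Nat.card (F₀ i ⊓ H.freeGraph F₀).ConnectedComponent =
      Nat.card (H.freeGraph F₀).ConnectedComponent :=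
    Nat.card_congr <| Quot.congrRight fun _ _ =>
      ⟨fun h => h.mono inf_le_right, fun h => hF₀.reachable_inf_freeGraph h i⟩
  have hF := (hF₀.1.isAcyclic i).ncard_edgeSet_add_card_connectedComponent
  have hFG := ((hF₀.1.isAcyclic i).anti (inf_le_left (b := H.freeGraph F₀))
    ).ncard_edgeSet_add_card_connectedComponent
  have hsplit :=
    Set.ncard_inter_add_ncard_sdiff_eq_ncard (F₀ i).edgeSet (H.freeGraph F₀).edgeSet
  have : 0 < Nat.card (F₀ i).ConnectedComponent := Nat.card_pos
  rw [edgeSet_inf] at hFG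
  omega

lemma IsMaxForestFamily.preconnected_freeGraph [Nonempty V] [Nonempty ι]
    (hH : H.IsEdgeConnected (2 * Fintype.card ι)) (hF₀ : IsMaxForestFamily H F₀) :
    (H.freeGraph F₀).Preconnected := by
  by_contra hnc
  have hcover : H.edgeSet \ (H.freeGraph F₀).edgeSet ⊆
      ⋃ i, (F₀ i).edgeSet \ (H.freeGraph F₀).edgeSet := by
    rintro e ⟨he, hfree⟩
    by_contra hnot
    simp only [Set.mem_iUnion, Set.mem_sdiff, not_exists, not_and, not_not] at hnot
    exact hfree (mem_edgeSet_freeGraph .refl he fun j hj => hfree (hnot j hj))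
  -- `k r ≤ |E(H) \ E'| ≤ ∑ i, |E(F₀ i) \ E'| < k r`, with `r` components of `(V, E')`
  have hcount := (hH.mul_card_connectedComponent_le hnc).trans
    (Nat.mul_le_mul_left 2 ((Set.ncard_le_ncard hcover).trans (Set.ncard_iUnion_le_of_fintype _)))
  have hlt := Finset.sum_lt_sum_of_nonempty Finset.univ_nonempty
    fun i (_ : i ∈ Finset.univ) => hF₀.ncard_edgeSet_sdiff_freeGraph_lt i
  simp only [Finset.sum_const, Finset.card_univ, smul_eq_mul] at hlt
  rw [mul_assoc] at hcount
  omega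

theorem IsEdgeConnected.treeConnected [Nonempty V] {k : ℕ}
    (hH : H.IsEdgeConnected (2 * k)) : TreeConnected k H := by
  rcases k.eq_zero_or_pos with rfl | hk
  · exact ⟨fun i => i.elim0, fun i => i.elim0, fun i => i.elim0, fun i => i.elim0⟩
  have : NeZero k := ⟨hk.ne'⟩
  let Families := {F : Fin k → SimpleGraph V // IsForestFamily H F}
  have : Nonempty Families :=
    ⟨fun _ => ⊥, fun _ => bot_le, fun _ => isAcyclic_bot, fun _ _ _ => by simp⟩
  obtain ⟨⟨F₀, hF₀⟩, hmax⟩ := Finite.exists_max fun F : Families => totalEdges F.1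
  have h₀ : IsMaxForestFamily H F₀ := ⟨hF₀, fun F hF => hmax ⟨F, hF⟩⟩
  have hconn := h₀.preconnected_freeGraph (by rwa [Fintype.card_fin])
  refine ⟨F₀, hF₀.le, fun i => ⟨?_, hF₀.isAcyclic i⟩, hF₀.pairwise_disjoint⟩
  exact ⟨fun u w => (h₀.reachable_inf_freeGraph (hconn u w) i).mono inf_le_left⟩

end TreePacking

section FiveConnected

variable {G : SimpleGraph V}

lemma exists_adj_of_preconnected_induce_compl {X U : Set V} (hX : (G.induce Xᶜ).Preconnected)
    {u w : V} (hu : u ∈ U) (huX : u ∉ X) (hw : w ∉ U) (hwX : w ∉ X) :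
    ∃ a b, G.Adj a b ∧ a ∈ U ∧ a ∉ X ∧ b ∉ U ∧ b ∉ X := by
  obtain ⟨p⟩ := hX ⟨u, huX⟩ ⟨w, hwX⟩
  obtain ⟨d, -, hd, hd'⟩ := p.exists_boundary_dart (Subtype.val ⁻¹' U) hu hw
  exact ⟨_, _, d.adj, hd, d.fst.2, hd', d.snd.2⟩

lemma FiveConnected.le_ncard_neighborSet [Finite V] (h5 : FiveConnected G) (x : V) :
    5 ≤ (G.neighborSet x).ncard := by
  by_contra! hlt
  obtain ⟨z, hz⟩ : ∃ z, z ∉ insert x (G.neighborSet x) := by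
    by_contra! hall
    have := Set.ncard_le_ncard (s := Set.univ) fun z _ => hall z
    have := Set.ncard_insert_le x (G.neighborSet x)
    rw [Set.ncard_univ] at *
    have := h5.1
    omega
  obtain ⟨a, b, hab, rfl, -, -, hb⟩ := exists_adj_of_preconnected_induce_compl
    (h5.2 (G.neighborSet x) (by omega)).preconnected (Set.mem_singleton x) (G.loopless.irrefl x)
    (fun h => hz (Or.inl h)) (fun h => hz (Or.inr h))
  exact hb hab

lemma FiveConnected.le_ncard_neighborSet_induce [Finite V] (h5 : FiveConnected G) (v : V)
    (u : ({v}ᶜ : Set V)) : 4 ≤ ((G.induce {v}ᶜ).neighborSet u).ncard := by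
  have hsub : G.neighborSet u ⊆ insert v (Subtype.val '' (G.induce {v}ᶜ).neighborSet u) := by
    intro w hw
    by_cases hwv : w = v
    · exact Or.inl hwv
    · exact Or.inr ⟨⟨w, hwv⟩, hw, rfl⟩
  have := (h5.le_ncard_neighborSet u).trans
    ((Set.ncard_le_ncard hsub).trans (Set.ncard_insert_le _ _))
  rw [Subtype.val_injective.injOn.ncard_image] at this
  omega

lemma FiveConnected.four_le_ncard_dartBoundary_induce_of_four_le_ncard [Finite V]
    (h5 : FiveConnected G) (v : V) {U : Set ({v}ᶜ : Set V)} (hU : 4 ≤ U.ncard)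
    (hUuniv : U ≠ Set.univ) : 4 ≤ ((G.induce {v}ᶜ).dartBoundary U).ncard := by
  set B := (G.induce {v}ᶜ).dartBoundary U
  by_contra! hB
  -- `v` and the tails of the darts in `B` would then separate `G`
  let X : Set V := insert v ((fun p => p.1.val) '' B)
  have hX : X.ncard ≤ 4 := (Set.ncard_insert_le _ _).trans (by
    have : ((fun p => p.1.val) '' B).ncard ≤ B.ncard := Set.ncard_image_le
    omega)
  obtain ⟨u₀, hu₀, hu₀X⟩ : ∃ u ∈ U, u.val ∉ X := by
    by_contra! hall
    have hsub : Subtype.val '' U ⊆ (fun p => p.1.val) '' B := by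
      rintro _ ⟨u, hu, rfl⟩
      exact (hall u hu).resolve_left u.2
    have := (Set.ncard_le_ncard hsub).trans (Set.ncard_image_le (s := B))
    rw [Subtype.val_injective.injOn.ncard_image] at this
    omega
  obtain ⟨w₀, hw₀⟩ := (Set.ne_univ_iff_exists_notMem U).mp hUuniv
  have hw₀X : w₀.val ∉ X := by
    rintro (h | ⟨p, hp, h⟩)
    · exact w₀.2 h
    · exact hw₀ (Subtype.val_injective h ▸ hp.2.1)
  obtain ⟨_, b, hab, ⟨a, ha, rfl⟩, haX, hb, hbX⟩ := exists_adj_of_preconnected_induce_compl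
    (U := Subtype.val '' U) (h5.2 X hX).preconnected ⟨u₀, hu₀, rfl⟩ hu₀X
    (fun ⟨w, hw, hww⟩ => hw₀ (Subtype.val_injective hww ▸ hw)) hw₀X
  have hbv : b ≠ v := fun h => hbX (Or.inl h)
  exact haX (Or.inr ⟨(a, ⟨b, hbv⟩), ⟨hab, ha, fun h => hb ⟨_, h, rfl⟩⟩, rfl⟩)

lemma FiveConnected.isEdgeConnected_induce [Finite V] (h5 : FiveConnected G) (v : V) :
    (G.induce {v}ᶜ).IsEdgeConnected 4 := by
  refine isEdgeConnected_iff_le_encard_dartBoundary.mpr fun U hU hUuniv => ?_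
  rw [← (Set.toFinite _).cast_ncard_eq, Nat.cast_le]
  rcases le_or_gt 4 U.ncard with hbig | hsmall
  · exact h5.four_le_ncard_dartBoundary_induce_of_four_le_ncard v hbig hUuniv
  · exact four_le_ncard_dartBoundary_of_ncard_lt_four (h5.le_ncard_neighborSet_induce v) hU hsmall

end FiveConnected

variable {H : SimpleGraph V} {m : ℕ}

lemma Iso.treeConnected {H' : SimpleGraph W} (φ : H ≃g H') (h : TreeConnected m H') :
    TreeConnected m H := by
  obtain ⟨T, hle, htree, hdisj⟩ := h
  refine ⟨fun i => (T i).comap φ.toEquiv.toEmbedding,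
    fun i a b hab => φ.map_adj_iff.mp (hle i hab),
    fun i => (Iso.comap φ.toEquiv (T i)).isTree_iff.mpr (htree i), fun i j hij => ?_⟩
  refine Set.disjoint_left.mpr fun e hi hj => ?_
  induction e with | h a b => ?_
  exact Set.disjoint_left.mp (hdisj hij) (show s(φ a, φ b) ∈ (T i).edgeSet from hi) hj

lemma TreeConnected.omega_eq_one (h : TreeConnected 2 H) : Omega H = 1 := by
  have huniv : IsMaxTCSet 2 H Set.univ :=
    ⟨H.induceUnivIso.treeConnected h, fun B hB _ => Set.univ_subset_iff.mp hB⟩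
  have hparts : {A | IsMaxTCSet 2 H A} = {Set.univ} :=
    Set.eq_singleton_iff_unique_mem.mpr
      ⟨huniv, fun A hA => (hA.2 _ (Set.subset_univ A) huniv.1).symm⟩
  have hcross : {e ∈ H.edgeSet | ¬ ∃ A, IsMaxTCSet 2 H A ∧ ∀ v ∈ e, v ∈ A} = ∅ :=
    Set.eq_empty_of_forall_notMem fun e he => he.2 ⟨Set.univ, huniv, fun _ _ => trivial⟩
  rw [Omega, hparts, hcross, Set.ncard_singleton, Set.ncard_empty]
  norm_num

end SimpleGraph

open SimpleGraph in
/-- If `G` is a 5-connected finite simple graph, then for every vertex `v`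
the graph `G − v` has two edge-disjoint spanning trees (it is 2-tree-connected), and hence
`Ω(G − v) = 1`. -/
theorem statement13 {V : Type} [Finite V] (G : SimpleGraph V) (h5 : FiveConnected G)
    (v : V) :
    TreeConnected 2 (G.induce {v}ᶜ) ∧ Omega (G.induce {v}ᶜ) = 1 := by
  have : Nontrivial V := Finite.one_lt_card_iff_nontrivial.mp (by have := h5.1; omega)
  obtain ⟨u, hu⟩ := exists_ne v
  have : Nonempty ({v}ᶜ : Set V) := ⟨⟨u, hu⟩⟩
  have htc : TreeConnected 2 (G.induce {v}ᶜ) := (h5.isEdgeConnected_induce v).treeConnected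
  exact ⟨htc, htc.omega_eq_one⟩
end
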